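/- arXiv:1708.04488 — 7 statements merged into one kernel-verified Lean document; each statement's English description precedes it below -/
import Mathlib

section
/- Every odd symmetric constellation admits a super edge-magic labeling. -/
namespace SEMAux

variable {t : ℕ}

/-- Partial column sums of the layered layout. -/
def Sv (a : Fin t → ℕ) (j : ℕ) : ℕ := ∑ k, min (a k) j

/-- Total of all pair sizes. -/
def Av (a : Fin t → ℕ) : ℕ := ∑ k, a k

/-- Number of pairs active in layer `j`. -/
def wv (a : Fin t → ℕ) (j : ℕ) : ℕ := (Finset.univ.filter (fun k => j < a k)).card

lemma Sv_mono (a : Fin t → ℕ) : Monotone (Sv a) := by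
  intro i j hij
  exact Finset.sum_le_sum (fun k _ => le_min (min_le_left _ _) (le_trans (min_le_right _ _) hij))

lemma Sv_le_Av (a : Fin t → ℕ) (j : ℕ) : Sv a j ≤ Av a :=
  Finset.sum_le_sum (fun k _ => min_le_left _ _)

lemma layer_eq {t : ℕ} (a : Fin t → ℕ) {j j' v : ℕ} (h1 : 2 * Sv a j ≤ v) (h2 : v < 2 * Sv a (j+1))
    (h3 : 2 * Sv a j' ≤ v) (h4 : v < 2 * Sv a (j'+1)) : j = j' := by
  rcases lt_trichotomy j j' with h | h | h
  · have := Sv_mono a (show j + 1 ≤ j' by omega); omega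
  · exact h
  · have := Sv_mono a (show j' + 1 ≤ j by omega); omega

lemma Sv_succ (a : Fin t → ℕ) (j : ℕ) : Sv a (j + 1) = Sv a j + wv a j := by
  classical
  have h : ∀ k : Fin t, min (a k) (j+1) = min (a k) j + (if j < a k then 1 else 0) := by
    intro k
    by_cases h : j < a k <;> simp [h] <;> omega
  unfold Sv wv
  rw [Finset.sum_congr rfl (fun k _ => h k), Finset.sum_add_distrib]
  simp [Finset.sum_ite_eq, Finset.sum_boole]

lemma lt_wv (a : Fin t → ℕ) (ha : Antitone a) {k : Fin t} {j : ℕ} (hj : j < a k) :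
    (k : ℕ) + 1 ≤ wv a j := by
  classical
  have hsub : Finset.Iic k ⊆ Finset.univ.filter (fun k' => j < a k') := by
    intro k' hk'
    simp only [Finset.mem_Iic] at hk'
    simp only [Finset.mem_filter, Finset.mem_univ, true_and]
    exact lt_of_lt_of_le hj (ha hk')
  have := Finset.card_le_card hsub
  rwa [Fin.card_Iic] at this

lemma wv_le_Sv_succ (a : Fin t → ℕ) (j : ℕ) : wv a j ≤ Sv a (j + 1) := by
  rw [Sv_succ]; omega

/-- the `hi` star value (`q = 1` : leaf-label offsets, `q = 2` : edge-sum offsets). -/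
def vhi (a : Fin t → ℕ) (q : ℕ) (k : Fin t) (j : ℕ) : ℕ := 2 * Sv a j + q * ((k : ℕ) + 1) - 1

/-- the `lo` star value. -/
def vlo (a : Fin t → ℕ) (q : ℕ) (k : Fin t) (j : ℕ) : ℕ := 2 * Sv a (j + 1) - q * ((k : ℕ) + 1)

section
variable {a : Fin t → ℕ} {q : ℕ} (ha : Antitone a) (hq : q = 1 ∨ q = 2)
  {k k' : Fin t} {j j' : ℕ} (hj : j < a k) (hj' : j' < a k')

include ha hq hj

lemma vhi_range : 2 * Sv a j ≤ vhi a q k j ∧ vhi a q k j < 2 * Sv a (j + 1) := by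
  have h1 := lt_wv a ha hj
  have h2 := Sv_succ a j
  unfold vhi
  rcases hq with h | h <;> subst h <;> omega

lemma vlo_range : 2 * Sv a j ≤ vlo a q k j ∧ vlo a q k j < 2 * Sv a (j + 1) := by
  have h1 := lt_wv a ha hj
  have h2 := Sv_succ a j
  unfold vlo
  rcases hq with h | h <;> subst h <;> omega

lemma vhi_lt_Av : vhi a q k j < 2 * Av a := by
  have h1 := (vhi_range ha hq hj).2
  have h2 := Sv_le_Av a (j+1)
  omega

lemma vlo_lt_Av : vlo a q k j < 2 * Av a := by
  have h1 := (vlo_range ha hq hj).2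
  have h2 := Sv_le_Av a (j+1)
  omega

include hj'

lemma vhi_inj (h : vhi a q k j = vhi a q k' j') : k = k' ∧ j = j' := by
  have hl := vhi_range ha hq hj
  have hl' := vhi_range ha hq hj'
  rw [← h] at hl'
  have hjj : j = j' := layer_eq a hl.1 hl.2 hl'.1 hl'.2
  subst hjj
  rw [h] at hl'
  refine ⟨?_, rfl⟩
  have h1 := lt_wv a ha hj
  have h2 := lt_wv a ha hj'
  unfold vhi at h
  have : (k : ℕ) = (k' : ℕ) := by rcases hq with h' | h' <;> subst h' <;> omega
  exact Fin.ext this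

lemma vlo_inj (h : vlo a q k j = vlo a q k' j') : k = k' ∧ j = j' := by
  have hl := vlo_range ha hq hj
  have hl' := vlo_range ha hq hj'
  rw [← h] at hl'
  have hjj : j = j' := layer_eq a hl.1 hl.2 hl'.1 hl'.2
  subst hjj
  rw [h] at hl'
  refine ⟨?_, rfl⟩
  have h1 := lt_wv a ha hj
  have h2 := lt_wv a ha hj'
  have h3 := Sv_succ a j
  have h4 := wv_le_Sv_succ a j
  unfold vlo at h
  have : (k : ℕ) = (k' : ℕ) := by rcases hq with h' | h' <;> subst h' <;> omega
  exact Fin.ext this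

lemma vhi_ne_vlo : vhi a q k j ≠ vlo a q k' j' := by
  intro h
  have hl := vhi_range ha hq hj
  have hl' := vlo_range ha hq hj'
  rw [← h] at hl'
  have hjj : j = j' := layer_eq a hl.1 hl.2 hl'.1 hl'.2
  subst hjj
  rw [h] at hl'
  have h1 := lt_wv a ha hj
  have h2 := lt_wv a ha hj'
  have h3 := Sv_succ a j
  have h4 := wv_le_Sv_succ a j
  unfold vhi vlo at h
  rcases hq with h' | h' <;> subst h' <;> omega

end


/-- Index for the stars: `hi` side of pair `k`, `lo` side of pair `k`, or the middle star. -/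
abbrev StarIdx (t : ℕ) := Fin t ⊕ Fin t ⊕ Unit

def sizeStar {t : ℕ} (a : Fin t → ℕ) (b : ℕ) : StarIdx t → ℕ :=
  Sum.elim a (Sum.elim a fun _ => b)

/-- Center labels. -/
def ctl (t : ℕ) : StarIdx t → ℕ :=
  Sum.elim (fun k => t + 2 + (k : ℕ)) (Sum.elim (fun k => t - (k : ℕ)) fun _ => t + 1)

/-- Leaf values: `q = 1` gives leaf-label offsets, `q = 2` gives edge-sum offsets. -/
def Wf {t : ℕ} (a : Fin t → ℕ) (q : ℕ) : StarIdx t → ℕ → ℕ :=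
  Sum.elim (fun k j => vhi a q k j) (Sum.elim (fun k j => vlo a q k j) fun _ j => 2 * Av a + j)

variable {t : ℕ} {a : Fin t → ℕ} {b q : ℕ}

lemma ctl_pos (i : StarIdx t) : 1 ≤ ctl t i := by
  rcases i with k | k | u <;> simp [ctl] <;> omega

lemma ctl_le (i : StarIdx t) : ctl t i ≤ 2 * t + 1 := by
  rcases i with k | k | u <;>
    simp only [ctl, Sum.elim_inl, Sum.elim_inr]
  · have := k.2; omega
  · omega
  · omega

lemma ctl_inj {i i' : StarIdx t} (h : ctl t i = ctl t i') : i = i' := by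
  rcases i with k | k | u <;> rcases i' with k' | k' | u' <;>
    simp only [ctl, Sum.elim_inl, Sum.elim_inr] at h
  · exact congrArg Sum.inl (Fin.ext (by omega))
  · exact absurd h (by have := k'.2; omega)
  · exact absurd h (by omega)
  · exact absurd h (by have := k.2; omega)
  · have hk := k.2; have hk' := k'.2
    exact congrArg (Sum.inr ∘ Sum.inl) (Fin.ext (by omega))
  · exact absurd h (by have := k.2; omega)
  · exact absurd h (by omega)
  · exact absurd h (by have := k'.2; omega)
  · rcases u with ⟨⟩; rcases u' with ⟨⟩; rfl

lemma Wf_lt (ha : Antitone a) (hq : q = 1 ∨ q = 2) {i : StarIdx t} {j : ℕ}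
    (hj : j < sizeStar a b i) : Wf a q i j < 2 * Av a + b := by
  rcases i with k | k | u <;> simp only [sizeStar, Sum.elim_inl, Sum.elim_inr, Wf] at hj ⊢
  · have := vhi_lt_Av ha hq hj; omega
  · have := vlo_lt_Av ha hq hj; omega
  · omega

lemma Wf_inj (ha : Antitone a) (hq : q = 1 ∨ q = 2) {i i' : StarIdx t} {j j' : ℕ}
    (hj : j < sizeStar a b i) (hj' : j' < sizeStar a b i')
    (h : Wf a q i j = Wf a q i' j') : i = i' ∧ j = j' := by
  rcases i with k | k | u <;> rcases i' with k' | k' | u' <;>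
      simp only [sizeStar, Sum.elim_inl, Sum.elim_inr] at hj hj' <;>
      simp only [Wf, Sum.elim_inl, Sum.elim_inr] at h
  · obtain ⟨h1, h2⟩ := vhi_inj ha hq hj hj' h
    exact ⟨by rw [h1], h2⟩
  · exact absurd h (vhi_ne_vlo ha hq hj hj')
  · exact absurd (vhi_lt_Av ha hq hj) (by omega)
  · exact absurd h.symm (vhi_ne_vlo ha hq hj' hj)
  · obtain ⟨h1, h2⟩ := vlo_inj ha hq hj hj' h
    exact ⟨by rw [h1], h2⟩
  · exact absurd (vlo_lt_Av ha hq hj) (by omega)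
  · exact absurd (vhi_lt_Av ha hq hj') (by omega)
  · exact absurd (vlo_lt_Av ha hq hj') (by omega)
  · rcases u with ⟨⟩; rcases u' with ⟨⟩; exact ⟨rfl, by omega⟩

lemma ctl_add_Wf (ha : Antitone a) {i : StarIdx t} {j : ℕ} (hj : j < sizeStar a b i) :
    ctl t i + (2 * t + 1 + 1 + Wf a 1 i j) = (2 * t + 1) + t + 2 + Wf a 2 i j := by
  rcases i with k | k | u <;>
      simp only [sizeStar, Sum.elim_inl, Sum.elim_inr] at hj <;>
      simp only [Wf, ctl, Sum.elim_inl, Sum.elim_inr, vhi, vlo]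
  · omega
  · have h1 := lt_wv a ha hj
    have h2 := wv_le_Sv_succ a j
    have h3 := k.2
    omega
  · omega

/-- On any finset one can pair up elements, leaving exactly one fixed point
when the cardinality is odd and none when it is even. -/
lemma exists_pairing {α : Type*} [DecidableEq α] (s : Finset α) :
    ∃ π : α → α, (∀ x, x ∉ s → π x = x) ∧ (∀ x, π (π x) = x) ∧ (∀ x ∈ s, π x ∈ s) ∧
      (s.filter (fun x => π x = x)).card = if Even s.card then 0 else 1 := by
  induction s using Finset.strongInduction with
  | _ s ih =>
    rcases le_or_gt s.card 1 with h1 | h2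
    · refine ⟨id, fun x _ => rfl, fun x => rfl, fun x hx => hx, ?_⟩
      have : s.filter (fun x => id x = x) = s := Finset.filter_true_of_mem (fun x _ => rfl)
      rw [this]
      interval_cases h : s.card <;> simp
    · obtain ⟨x, hx, y, hy, hxy⟩ := Finset.one_lt_card.mp h2
      set s' := (s.erase x).erase y with hs'
      have hmem : ∀ z, z ∈ s' ↔ z ∈ s ∧ z ≠ x ∧ z ≠ y := by
        intro z
        simp only [hs', Finset.mem_erase]
        tauto
      have hss : s' ⊂ s := by
        refine Finset.ssubset_iff_of_subset (fun z hz => ((hmem z).mp hz).1) |>.mpr ?_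
        exact ⟨x, hx, fun hz => ((hmem x).mp hz).2.1 rfl⟩
      obtain ⟨π', hπ'1, hπ'2, hπ'3, hπ'4⟩ := ih s' hss
      have hπ'x : π' x = x := hπ'1 x (fun hz => ((hmem x).mp hz).2.1 rfl)
      have hπ'y : π' y = y := hπ'1 y (fun hz => ((hmem y).mp hz).2.2 rfl)
      refine ⟨fun z => if z = x then y else if z = y then x else π' z, ?_, ?_, ?_, ?_⟩
      · intro z hz
        have hzx : z ≠ x := fun h => hz (h ▸ hx)
        have hzy : z ≠ y := fun h => hz (h ▸ hy)
        simp only [if_neg hzx, if_neg hzy]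
        exact hπ'1 z (fun h => hz (((hmem z).mp h).1))
      · intro z
        by_cases hzx : z = x
        · simp [hzx, if_neg hxy.symm, hxy.symm]
        by_cases hzy : z = y
        · simp [hzy, if_neg hxy, hxy]
        · simp only [if_neg hzx, if_neg hzy]
          by_cases hz : z ∈ s'
          · have h1 : π' z ∈ s' := hπ'3 z hz
            have h2 : π' z ≠ x := fun h => ((hmem _).mp h1).2.1 h
            have h3 : π' z ≠ y := fun h => ((hmem _).mp h1).2.2 h
            simp only [if_neg h2, if_neg h3]
            exact hπ'2 z
          · rw [hπ'1 z hz, if_neg hzx, if_neg hzy, hπ'1 z hz]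
      · intro z hz
        by_cases hzx : z = x
        · simp only [if_pos hzx]; exact hy
        by_cases hzy : z = y
        · simp only [if_neg hzx, if_pos hzy]; exact hx
        · simp only [if_neg hzx, if_neg hzy]
          have hz' : z ∈ s' := (hmem z).mpr ⟨hz, hzx, hzy⟩
          exact ((hmem _).mp (hπ'3 z hz')).1
      · have hcard : s.card = s'.card + 2 := by
          have h1 : (s.erase x).card = s.card - 1 := Finset.card_erase_of_mem hx
          have h2 : s'.card = (s.erase x).card - 1 :=
            Finset.card_erase_of_mem (Finset.mem_erase.mpr ⟨Ne.symm hxy, hy⟩)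
          omega
        have hfil : s.filter (fun z => (if z = x then y else if z = y then x else π' z) = z)
            = s'.filter (fun z => π' z = z) := by
          ext z
          simp only [Finset.mem_filter, hmem z]
          constructor
          · rintro ⟨hz, hfz⟩
            by_cases hzx : z = x
            · rw [if_pos hzx, hzx] at hfz; exact absurd hfz hxy.symm
            by_cases hzy : z = y
            · rw [if_neg hzx, if_pos hzy, hzy] at hfz; exact absurd hfz hxy
            · rw [if_neg hzx, if_neg hzy] at hfz
              exact ⟨⟨hz, hzx, hzy⟩, hfz⟩
          · rintro ⟨⟨hz, hzx, hzy⟩, hfz⟩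
            exact ⟨hz, by rw [if_neg hzx, if_neg hzy]; exact hfz⟩
        rw [hfil, hπ'4, hcard]
        have hiff : Even (s'.card + 2) ↔ Even s'.card := by
          constructor <;> rintro ⟨r, hr⟩
          · exact ⟨r - 1, by omega⟩
          · exact ⟨r + 1, by omega⟩
        exact (if_congr hiff rfl rfl).symm

end SEMAux



/-- An edge-magic labeling of an `n`-vertex graph `G` with `m` edges and magic constant `k`:
a bijection `f : V ∪ E → {1,…,n+m}` with `f(u)+f(v)+f(uv) = k` for every edge `uv`. -/
def IsEdgeMagicLabeling {V : Type*} [Fintype V] (G : SimpleGraph V)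
    (f : V ⊕ ↥G.edgeSet → ℕ) (k : ℕ) : Prop :=
  Set.BijOn f Set.univ (Set.Icc 1 (Fintype.card V + G.edgeSet.ncard)) ∧
  ∀ (u v : V) (h : G.Adj u v),
    f (Sum.inl u) + f (Sum.inl v) + f (Sum.inr ⟨s(u, v), (G.mem_edgeSet).mpr h⟩) = k

/-- A super edge-magic labeling: an edge-magic labeling whose vertex labels are
exactly `{1,…,n}`. -/
def IsSuperEdgeMagicLabeling {V : Type*} [Fintype V] (G : SimpleGraph V)
    (f : V ⊕ ↥G.edgeSet → ℕ) : Prop :=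
  (∃ k, IsEdgeMagicLabeling G f k) ∧
  Set.range (fun v : V => f (Sum.inl v)) = Set.Icc 1 (Fintype.card V)

/-- A graph is super edge-magic if it admits a super edge-magic labeling. -/
def SuperEdgeMagic {V : Type*} [Fintype V] (G : SimpleGraph V) : Prop :=
  ∃ f, IsSuperEdgeMagicLabeling G f

/-- A star: a connected graph having a center incident to every edge
(equivalently, a tree isomorphic to `K_{1,t}` for some `t ≥ 0`). -/
def IsStar {V : Type*} (G : SimpleGraph V) : Prop :=
  G.Connected ∧ ∃ c : V, ∀ u v : V, G.Adj u v → u = c ∨ v = c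


open SEMAux in
/-- Every odd symmetric constellation admits a super edge-magic labeling.
A constellation is a forest all of whose connected components are stars; it is odd if the
number of components is odd, and symmetric if the number of stars of each size is even
except for at most one size (a star of size `s` has `s + 1` vertices). -/
theorem super_edge_magic_of_odd_symmetric_constellation
    {V : Type*} [Fintype V] (G : SimpleGraph V)
    (hstar : ∀ c : G.ConnectedComponent, IsStar (G.induce c.supp))
    (hodd : Odd (Nat.card G.ConnectedComponent))
    (hsym : ∃ s₀ : ℕ, ∀ s : ℕ, s ≠ s₀ →
      Even (Nat.card {c : G.ConnectedComponent // c.supp.ncard = s + 1})) :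
    SuperEdgeMagic G := by
  classical
  letI : Fintype G.ConnectedComponent := Fintype.ofFinite _
  obtain ⟨t, ht⟩ : ∃ t, Fintype.card G.ConnectedComponent = 2 * t + 1 := by
    rcases hodd with ⟨m, hm⟩
    exact ⟨m, by rw [← Nat.card_eq_fintype_card]; omega⟩
  -- size of each component (number of leaves)
  set sz : G.ConnectedComponent → ℕ := fun c => c.supp.ncard - 1 with hsz_def
  have hsupp_ncard : ∀ c : G.ConnectedComponent, c.supp.ncard = sz c + 1 := by
    intro c
    obtain ⟨v, hv⟩ := c.exists_rep
    have hvmem : v ∈ c.supp := by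
      rw [SimpleGraph.ConnectedComponent.mem_supp_iff]; exact hv
    have hpos : 0 < c.supp.ncard := (Set.ncard_pos (Set.toFinite _)).mpr ⟨v, hvmem⟩
    simp only [hsz_def]; omega
  -- the center of each component
  have hctr' : ∀ c : G.ConnectedComponent, ∃ x : V, x ∈ c.supp ∧
      (∀ u v : V, G.Adj u v → u ∈ c.supp → (u = x ∨ v = x)) ∧
      (∀ v ∈ c.supp, v ≠ x → G.Adj x v) := by
    intro c
    obtain ⟨hconn, x0, hx0⟩ := hstar c
    refine ⟨x0.1, x0.2, ?_, ?_⟩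
    · intro u v huv hu
      have hv : v ∈ c.supp := by
        rw [SimpleGraph.ConnectedComponent.mem_supp_iff] at hu ⊢
        rw [← hu]
        exact (SimpleGraph.ConnectedComponent.connectedComponentMk_eq_of_adj huv).symm
      have hadj : (G.induce c.supp).Adj ⟨u, hu⟩ ⟨v, hv⟩ := huv
      rcases hx0 _ _ hadj with h | h
      · exact Or.inl (congrArg Subtype.val h)
      · exact Or.inr (congrArg Subtype.val h)
    · intro v hv hne
      obtain ⟨p⟩ := hconn.preconnected ⟨v, hv⟩ x0
      cases p with
      | nil => exact absurd rfl hne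
      | cons h p =>
        rcases hx0 _ _ h with h1 | h1
        · exact absurd (congrArg Subtype.val h1) hne
        · rw [h1] at h
          exact ((h : G.Adj v x0.1).symm : G.Adj x0.1 v)
  choose ctr hctr_mem hctr_edge hctr_adj using hctr'
  have hctr_mk : ∀ c : G.ConnectedComponent, G.connectedComponentMk (ctr c) = c :=
    fun c => (SimpleGraph.ConnectedComponent.mem_supp_iff _ _).mp (hctr_mem c)
  -- fibers of the size function and the size-preserving pairing involution
  obtain ⟨s₀, hs₀⟩ := hsym
  have hfib_even : ∀ s : ℕ, s ≠ s₀ →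
      Even ((Finset.univ.filter (fun c : G.ConnectedComponent => sz c = s)).card) := by
    intro s hs
    have h1 := hs₀ s hs
    have h2 : Nat.card {c : G.ConnectedComponent // c.supp.ncard = s + 1}
        = (Finset.univ.filter (fun c : G.ConnectedComponent => sz c = s)).card := by
      rw [Nat.card_eq_fintype_card, Fintype.card_subtype]
      congr 1
      apply Finset.filter_congr
      intro c _
      rw [hsupp_ncard c]
      omega
    rwa [h2] at h1
  obtain ⟨ι, hι_sz, hι_inv, c₀, hfix_iff⟩ :
      ∃ ι : G.ConnectedComponent → G.ConnectedComponent,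
        (∀ c, sz (ι c) = sz c) ∧ (∀ c, ι (ι c) = c) ∧
        ∃ c₀, ∀ c, (ι c = c ↔ c = c₀) := by
    have hpair := fun s : ℕ =>
      exists_pairing (Finset.univ.filter (fun c : G.ConnectedComponent => sz c = s))
    choose π hπ1 hπ2 hπ3 hπ4 using hpair
    have hfib_odd : ¬ Even ((Finset.univ.filter
        (fun c : G.ConnectedComponent => sz c = s₀)).card) := by
      intro hev
      have hsum : Finset.univ.card =
          ∑ s ∈ Finset.univ.image sz,
            (Finset.univ.filter (fun c : G.ConnectedComponent => sz c = s)).card :=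
        Finset.card_eq_sum_card_fiberwise
          (fun x _ => Finset.mem_image_of_mem sz (Finset.mem_univ x))
      have hdvd : 2 ∣ ∑ s ∈ Finset.univ.image sz,
          (Finset.univ.filter (fun c : G.ConnectedComponent => sz c = s)).card := by
        apply Finset.dvd_sum
        intro s _
        by_cases h : s = s₀
        · subst h; obtain ⟨r, hr⟩ := hev; exact ⟨r, by omega⟩
        · obtain ⟨r, hr⟩ := hfib_even s h; exact ⟨r, by omega⟩
      rw [← hsum, Finset.card_univ, ht] at hdvd
      omega
    have hι_sz' : ∀ c, sz (π (sz c) c) = sz c := by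
      intro c
      have hmem : c ∈ Finset.univ.filter (fun d => sz d = sz c) := by simp
      exact (Finset.mem_filter.mp (hπ3 (sz c) c hmem)).2
    have h1 : ((Finset.univ.filter (fun c : G.ConnectedComponent => sz c = s₀)).filter
        (fun c => π s₀ c = c)).card = 1 := by
      rw [hπ4, if_neg hfib_odd]
    obtain ⟨c₀, hc₀⟩ := Finset.card_eq_one.mp h1
    have hc₀mem := hc₀ ▸ Finset.mem_singleton_self c₀
    have hc₀sz : sz c₀ = s₀ := (Finset.mem_filter.mp (Finset.mem_filter.mp hc₀mem).1).2
    have hc₀fix : π s₀ c₀ = c₀ := (Finset.mem_filter.mp hc₀mem).2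
    refine ⟨fun c => π (sz c) c, hι_sz', ?_, c₀, ?_⟩
    · intro c
      have h2 := hι_sz' c
      calc π (sz (π (sz c) c)) (π (sz c) c) = π (sz c) (π (sz c) c) := by rw [h2]
        _ = c := hπ2 (sz c) c
    · intro c
      constructor
      · intro h
        by_cases hs : sz c = s₀
        · have hmem : c ∈ ((Finset.univ.filter
              (fun c : G.ConnectedComponent => sz c = s₀)).filter (fun c => π s₀ c = c)) := by
            refine Finset.mem_filter.mpr ⟨Finset.mem_filter.mpr ⟨Finset.mem_univ c, hs⟩, ?_⟩
            rw [← hs]; exact h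
          rw [hc₀] at hmem
          exact Finset.mem_singleton.mp hmem
        · exfalso
          have h0 : ((Finset.univ.filter
              (fun d : G.ConnectedComponent => sz d = sz c)).filter
              (fun d => π (sz c) d = d)).card = 0 := by
            rw [hπ4, if_pos (hfib_even _ hs)]
          have hmem : c ∈ ((Finset.univ.filter
              (fun d : G.ConnectedComponent => sz d = sz c)).filter
              (fun d => π (sz c) d = d)) :=
            Finset.mem_filter.mpr ⟨Finset.mem_filter.mpr ⟨Finset.mem_univ c, rfl⟩, h⟩
          rw [Finset.card_eq_zero.mp h0] at hmem
          exact absurd hmem (Finset.notMem_empty c)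
      · rintro rfl
        show π (sz c) c = c
        rw [hc₀sz]
        exact hc₀fix
  have hι_inj : Function.Injective ι := Function.Involutive.injective hι_inv
  have hιc₀ : ι c₀ = c₀ := (hfix_iff c₀).mpr rfl
  -- the set of `hi`-side representatives
  set e₀ := Fintype.equivFin G.ConnectedComponent with he₀
  set R : Finset G.ConnectedComponent :=
    Finset.univ.filter (fun c => c ≠ c₀ ∧ e₀ c < e₀ (ι c)) with hR
  have hmemR : ∀ c, c ∈ R ↔ (c ≠ c₀ ∧ e₀ c < e₀ (ι c)) := by
    intro c; simp [hR]
  have hι_ne_c₀ : ∀ c, c ≠ c₀ → ι c ≠ c₀ := by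
    intro c hc h
    exact hc (by rw [← hι_inv c, h, hιc₀])
  have hpartR : ∀ c, c ≠ c₀ → (c ∈ R ↔ ι c ∉ R) := by
    intro c hc
    have hne : ι c ≠ c := fun h => hc ((hfix_iff c).mp h)
    constructor
    · intro h1 h2
      rw [hmemR] at h1 h2
      rw [hι_inv c] at h2
      exact absurd h2.2 (not_lt.mpr (le_of_lt h1.2))
    · intro h2
      rw [hmemR] at h2 ⊢
      refine ⟨hc, ?_⟩
      have h3 := not_and.mp h2 (hι_ne_c₀ c hc)
      rw [hι_inv c] at h3
      rcases lt_or_eq_of_le (not_lt.mp h3) with h4 | h4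
      · exact h4
      · exact absurd (e₀.injective h4) (Ne.symm hne)
  have hmem_img : ∀ c, c ∈ R.image ι ↔ (c ≠ c₀ ∧ c ∉ R) := by
    intro c
    constructor
    · intro h
      obtain ⟨d, hd, rfl⟩ := Finset.mem_image.mp h
      have hdc₀ : d ≠ c₀ := ((hmemR d).mp hd).1
      exact ⟨hι_ne_c₀ d hdc₀, fun hcon => ((hpartR d hdc₀).mp hd) hcon⟩
    · rintro ⟨h1, h2⟩
      have h3 : ι c ∈ R := by
        by_contra h4
        exact h2 ((hpartR c h1).mpr h4)
      exact Finset.mem_image.mpr ⟨ι c, h3, hι_inv c⟩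
  have hcard_R : R.card = t := by
    have hdisj1 : Disjoint R (R.image ι) := by
      rw [Finset.disjoint_left]
      intro c hc hc2
      exact ((hmem_img c).mp hc2).2 hc
    have hc₀R : c₀ ∉ R := fun h => ((hmemR c₀).mp h).1 rfl
    have hc₀img : c₀ ∉ R.image ι := fun h => ((hmem_img c₀).mp h).1 rfl
    have huniv : (insert c₀ (R ∪ R.image ι)) = Finset.univ := by
      apply Finset.eq_univ_iff_forall.mpr
      intro c
      by_cases h1 : c = c₀
      · exact Finset.mem_insert.mpr (Or.inl h1)
      by_cases h2 : c ∈ R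
      · exact Finset.mem_insert.mpr (Or.inr (Finset.mem_union_left _ h2))
      · exact Finset.mem_insert.mpr (Or.inr (Finset.mem_union_right _
          ((hmem_img c).mpr ⟨h1, h2⟩)))
    have hcard2 : Fintype.card G.ConnectedComponent = 1 + (R.card + R.card) := by
      rw [← Finset.card_univ, ← huniv,
        Finset.card_insert_of_notMem
          (fun h => (Finset.mem_union.mp h).elim hc₀R hc₀img),
        Finset.card_union_of_disjoint hdisj1,
        Finset.card_image_of_injective _ hι_inj]
      omega
    omega
  -- sorted enumeration of the representatives
  set EFin : Fin t ≃ ↥R := (finCongr hcard_R.symm).trans R.equivFin.symm with hEFin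
  set σp := Tuple.sort (fun k => sz (EFin k).1) with hσp
  set repE : Fin t ≃ ↥R := (Fin.revPerm.trans σp).trans EFin with hrepE
  set a : Fin t → ℕ := fun k => sz (repE k).1 with ha_def
  have ha : Antitone a := by
    intro k k' hkk'
    have h1 : Fin.rev k' ≤ Fin.rev k := Fin.rev_le_rev.mpr hkk'
    exact Tuple.monotone_sort (fun k => sz (EFin k).1) h1
  set b := sz c₀ with hb_def
  -- the classification equivalence
  have hΘbij : Function.Bijective (Sum.elim (fun k => ((repE k).1 : G.ConnectedComponent))
      (Sum.elim (fun k => ι (repE k).1) (fun _ : Unit => c₀)) : StarIdx t → G.ConnectedComponent) := by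
    constructor
    · intro i i' h
      rcases i with k | k | u <;> rcases i' with k' | k' | u' <;>
        simp only [Sum.elim_inl, Sum.elim_inr] at h
      · rw [repE.injective (Subtype.ext h)]
      · exfalso
        have h1 : ι (repE k').1 ∈ R := h ▸ (repE k).2
        have h2 : (repE k').1 ∈ R := (repE k').2
        exact ((hpartR _ ((hmemR _).mp h2).1).mp h2) h1
      · exact absurd h (((hmemR _).mp (repE k).2).1)
      · exfalso
        have h1 : ι (repE k).1 ∈ R := h ▸ (repE k').2
        have h2 : (repE k).1 ∈ R := (repE k).2
        exact ((hpartR _ ((hmemR _).mp h2).1).mp h2) h1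
      · rw [repE.injective (Subtype.ext (hι_inj h))]
      · exfalso
        have h2 : (repE k).1 = c₀ := by rw [← hι_inv (repE k).1, h, hιc₀]
        exact ((hmemR _).mp (repE k).2).1 h2
      · exact absurd h.symm (((hmemR _).mp (repE k').2).1)
      · exfalso
        have h2 : (repE k').1 = c₀ := by rw [← hι_inv (repE k').1, ← h, hιc₀]
        exact ((hmemR _).mp (repE k').2).1 h2
      · rcases u; rcases u'; rfl
    · intro c
      by_cases h1 : c = c₀
      · exact ⟨Sum.inr (Sum.inr ()), h1.symm⟩
      by_cases h2 : c ∈ R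
      · refine ⟨Sum.inl (repE.symm ⟨c, h2⟩), ?_⟩
        simp only [Sum.elim_inl, Equiv.apply_symm_apply]
      · have h3 : ι c ∈ R := by
          by_contra h4
          exact h2 ((hpartR c h1).mpr h4)
        refine ⟨Sum.inr (Sum.inl (repE.symm ⟨ι c, h3⟩)), ?_⟩
        simp only [Sum.elim_inr, Sum.elim_inl, Equiv.apply_symm_apply]
        exact hι_inv c
  set Ψ : G.ConnectedComponent ≃ StarIdx t := (Equiv.ofBijective _ hΘbij).symm with hΨ
  have hΨ_spec : ∀ c, Sum.elim (fun k => ((repE k).1 : G.ConnectedComponent))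
      (Sum.elim (fun k => ι (repE k).1) (fun _ : Unit => c₀)) (Ψ c) = c := by
    intro c
    exact (Equiv.ofBijective _ hΘbij).apply_symm_apply c
  have hsz_star : ∀ c, sz c = sizeStar a b (Ψ c) := by
    intro c
    conv_lhs => rw [← hΨ_spec c]
    rcases Ψ c with k | k | u
    · rfl
    · simp only [Sum.elim_inl, Sum.elim_inr, sizeStar]
      rw [hι_sz]
    · rfl
  -- leaves and their enumeration
  set Lv : G.ConnectedComponent → Set V := fun c => {v | v ∈ c.supp ∧ v ≠ ctr c} with hLv
  have hLv_card : ∀ c, Nat.card ↥(Lv c) = sz c := by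
    intro c
    have h1 : Lv c = c.supp \ {ctr c} :=
      Set.ext fun v => ⟨fun h => ⟨h.1, h.2⟩, fun h => ⟨h.1, h.2⟩⟩
    rw [Nat.card_coe_set_eq, h1, Set.ncard_diff_singleton_of_mem (hctr_mem c),
      hsupp_ncard]
    omega
  have hlidx' : ∀ c, ∃ F : V → ℕ, (∀ v ∈ Lv c, F v < sz c) ∧ Set.InjOn F (Lv c) := by
    intro c
    have e := Finite.equivFinOfCardEq (hLv_card c)
    refine ⟨fun v => if h : v ∈ Lv c then (e ⟨v, h⟩).1 else 0, ?_, ?_⟩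
    · intro v hv; simp only [dif_pos hv]; exact (e ⟨v, hv⟩).2
    · intro v hv v' hv' h
      simp only [dif_pos hv, dif_pos hv'] at h
      exact congrArg Subtype.val (e.injective (Fin.ext h))
  choose lidx hlidx_lt hlidx_inj using hlidx'
  have hlidx_size : ∀ c, ∀ v ∈ Lv c, lidx c v < sizeStar a b (Ψ c) := by
    intro c v hv
    rw [← hsz_star c]; exact hlidx_lt c v hv
  -- the labeling of vertices
  set lam := 2 * t + 1 with hlam
  set MM := 2 * Av a + b with hMM
  set g : V → ℕ := fun v =>
    if v = ctr (G.connectedComponentMk v) then ctl t (Ψ (G.connectedComponentMk v))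
    else lam + 1 + Wf a 1 (Ψ (G.connectedComponentMk v)) (lidx (G.connectedComponentMk v) v)
    with hg
  have hg_ctr : ∀ c, g (ctr c) = ctl t (Ψ c) := by
    intro c
    have h1 := hctr_mk c
    simp [hg, h1]
  have hg_leaf : ∀ c, ∀ v ∈ Lv c, g v = lam + 1 + Wf a 1 (Ψ c) (lidx c v) := by
    intro c v hv
    have h1 : G.connectedComponentMk v = c := hv.1
    have h2 := hv.2
    simp only [hg, h1]
    rw [if_neg h2]
  have htri : ∀ v : V, v = ctr (G.connectedComponentMk v) ∨ v ∈ Lv (G.connectedComponentMk v) := by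
    intro v
    by_cases h : v = ctr (G.connectedComponentMk v)
    · exact Or.inl h
    · exact Or.inr ⟨rfl, h⟩
  -- counting
  have hsum_sz : ∑ c : G.ConnectedComponent, sz c = MM := by
    have h1 : ∑ c : G.ConnectedComponent, sz c = ∑ i : StarIdx t, sizeStar a b i :=
      Fintype.sum_equiv Ψ _ _ (fun c => hsz_star c)
    rw [h1, hMM]
    rw [Fintype.sum_sum_type, Fintype.sum_sum_type]
    have h2 : ∑ k : Fin t, sizeStar a b (Sum.inl k) = Av a := rfl
    have h3 : ∑ k : Fin t, sizeStar a b (Sum.inr (Sum.inl k)) = Av a := rfl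
    have h4 : ∑ u : Unit, sizeStar a b (Sum.inr (Sum.inr u)) = b := by
      simp [sizeStar]
    rw [h2, h3, h4]
    omega
  have hcardV : Fintype.card V = lam + MM := by
    have e1 : V ≃ Σ c : G.ConnectedComponent, ↥c.supp :=
      { toFun := fun v => ⟨G.connectedComponentMk v, ⟨v, rfl⟩⟩
        invFun := fun p => p.2.1
        left_inv := fun v => rfl
        right_inv := by
          rintro ⟨c, v, hv⟩
          obtain rfl : G.connectedComponentMk v = c := hv
          rfl }
    rw [Fintype.card_congr e1, Fintype.card_sigma]
    have h2 : ∀ c : G.ConnectedComponent, Fintype.card ↥c.supp = sz c + 1 := by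
      intro c
      rw [← Nat.card_eq_fintype_card, Nat.card_coe_set_eq, hsupp_ncard]
    rw [Finset.sum_congr rfl (fun c _ => h2 c), Finset.sum_add_distrib, hsum_sz,
      Finset.sum_const, Finset.card_univ, ht, smul_eq_mul, mul_one, hlam]
    omega
  -- edges
  have hedge_char : ∀ e : ↥G.edgeSet, ∃ v : V, v ∈ Lv (G.connectedComponentMk v) ∧
      e.1 = s(ctr (G.connectedComponentMk v), v) := by
    rintro ⟨e, he⟩
    induction e using Sym2.ind with
    | _ u v =>
      have hadj : G.Adj u v := (G.mem_edgeSet).mp he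
      have hmk : G.connectedComponentMk u = G.connectedComponentMk v :=
        SimpleGraph.ConnectedComponent.connectedComponentMk_eq_of_adj hadj
      rcases hctr_edge (G.connectedComponentMk u) u v hadj rfl with h | h
      · refine ⟨v, ⟨rfl, ?_⟩, ?_⟩
        · intro h2
          rw [← hmk] at h2
          exact hadj.ne (h.trans h2.symm)
        · simp only
          rw [← hmk, ← h]
      · refine ⟨u, ⟨rfl, ?_⟩, ?_⟩
        · intro h2
          exact hadj.ne (h2.trans h.symm)
        · simp only
          rw [← h]
          exact Sym2.eq_swap
  choose lf hlf_mem hlf_eq using hedge_char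
  have hcardE : G.edgeSet.ncard = MM := by
    have hcardSig : Nat.card (Σ c : G.ConnectedComponent, ↥(Lv c)) = MM := by
      rw [Nat.card_eq_fintype_card, Fintype.card_sigma]
      rw [Finset.sum_congr rfl
        (fun c _ => by rw [← Nat.card_eq_fintype_card, hLv_card c])]
      exact hsum_sz
    have hinj1 : Function.Injective (fun e : ↥G.edgeSet =>
        (⟨G.connectedComponentMk (lf e), ⟨lf e, hlf_mem e⟩⟩ :
          Σ c : G.ConnectedComponent, ↥(Lv c))) := by
      intro e e' h
      have h2 : lf e = lf e' :=
        congrArg (fun p : Σ c : G.ConnectedComponent, ↥(Lv c) => (p.2.1 : V)) h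
      apply Subtype.ext
      rw [hlf_eq e, hlf_eq e', h2]
    have hinj2 : Function.Injective (fun p : Σ c : G.ConnectedComponent, ↥(Lv c) =>
        (⟨s(ctr p.1, p.2.1), (G.mem_edgeSet).mpr
          (hctr_adj p.1 p.2.1 p.2.2.1 p.2.2.2)⟩ : ↥G.edgeSet)) := by
      rintro ⟨c, v, hv⟩ ⟨c', v', hv'⟩ h
      have h1 : s(ctr c, v) = s(ctr c', v') := congrArg Subtype.val h
      rcases Sym2.eq_iff.mp h1 with ⟨h2, h3⟩ | ⟨h2, h3⟩
      · have hcc : c = c' := by rw [← hctr_mk c, ← hctr_mk c', h2]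
        subst hcc; subst h3; rfl
      · exfalso
        have h4 : G.connectedComponentMk v' = c := by rw [← h2, hctr_mk]
        have h5 : c = c' := by rw [← h4]; exact hv'.1
        exact hv'.2 (by rw [← h5, ← h2])
    have hle1' : Nat.card ↥G.edgeSet ≤ Nat.card (Σ c : G.ConnectedComponent, ↥(Lv c)) :=
      Nat.card_le_card_of_injective _ hinj1
    have hle2' : Nat.card (Σ c : G.ConnectedComponent, ↥(Lv c)) ≤ Nat.card ↥G.edgeSet :=
      Nat.card_le_card_of_injective _ hinj2
    have hgoal : Nat.card ↥G.edgeSet = MM := by omega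
    rw [← Nat.card_coe_set_eq]
    exact hgoal
  -- the full labeling
  set es : Sym2 V → ℕ := Sym2.lift ⟨fun u v => g u + g v, fun u v => by ring⟩ with hes
  set K := (lam + MM) + MM + lam + t + 2 with hK
  set f : V ⊕ ↥G.edgeSet → ℕ := Sum.elim g (fun e => K - es e.1) with hf
  have hes_mk : ∀ u v : V, es s(u, v) = g u + g v := by
    intro u v; rw [hes]; rfl
  have hes_edge : ∀ e : ↥G.edgeSet, es e.1 =
      lam + t + 2 + Wf a 2 (Ψ (G.connectedComponentMk (lf e)))
        (lidx (G.connectedComponentMk (lf e)) (lf e)) := by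
    intro e
    rw [hlf_eq e, hes_mk, hg_ctr, hg_leaf _ _ (hlf_mem e)]
    have hj := hlidx_size _ _ (hlf_mem e)
    have h2 := ctl_add_Wf (b := b) ha hj
    simp only [hlam] at *
    omega
  have hes_bound : ∀ e : ↥G.edgeSet, lam + t + 2 ≤ es e.1 ∧ es e.1 ≤ lam + t + 1 + MM := by
    intro e
    rw [hes_edge e]
    have h1 := Wf_lt (b := b) ha (Or.inr rfl) (hlidx_size _ _ (hlf_mem e))
    simp only [hMM] at *
    omega
  -- bounds for g
  have hg_low : ∀ v : V, 1 ≤ g v := by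
    intro v
    rcases htri v with h | h
    · rw [h, hg_ctr]; exact ctl_pos _
    · rw [hg_leaf _ _ h]; omega
  have hg_high : ∀ v : V, g v ≤ lam + MM := by
    intro v
    rcases htri v with h | h
    · rw [h, hg_ctr]
      have := ctl_le (Ψ (G.connectedComponentMk v))
      simp only [hlam]; omega
    · rw [hg_leaf _ _ h]
      have := Wf_lt (b := b) ha (Or.inl rfl) (hlidx_size _ _ h)
      simp only [hMM] at *; omega
  -- injectivity of g
  have hg_inj : Function.Injective g := by
    intro u v h
    rcases htri u with hu | hu <;> rcases htri v with hv | hv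
    · rw [hu, hv] at h ⊢
      rw [hg_ctr, hg_ctr] at h
      rw [Ψ.injective (ctl_inj h)]
    · exfalso
      rw [hu, hg_ctr] at h
      rw [hg_leaf _ _ hv] at h
      have := ctl_le (Ψ (G.connectedComponentMk u))
      simp only [hlam] at *
      omega
    · exfalso
      rw [hv, hg_ctr] at h
      rw [hg_leaf _ _ hu] at h
      have := ctl_le (Ψ (G.connectedComponentMk v))
      simp only [hlam] at *
      omega
    · rw [hg_leaf _ _ hu, hg_leaf _ _ hv] at h
      have h2 : Wf a 1 (Ψ (G.connectedComponentMk u)) (lidx (G.connectedComponentMk u) u)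
          = Wf a 1 (Ψ (G.connectedComponentMk v)) (lidx (G.connectedComponentMk v) v) := by
        omega
      obtain ⟨hΨeq, hjeq⟩ := Wf_inj (b := b) ha (Or.inl rfl)
        (hlidx_size _ _ hu) (hlidx_size _ _ hv) h2
      have hcc : G.connectedComponentMk u = G.connectedComponentMk v := Ψ.injective hΨeq
      rw [← hcc] at hv hjeq
      exact hlidx_inj (G.connectedComponentMk u) hu hv hjeq
  -- injectivity of the edge labels via sums
  have hes_inj : ∀ e e' : ↥G.edgeSet, es e.1 = es e'.1 → e = e' := by
    intro e e' h
    rw [hes_edge e, hes_edge e'] at h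
    have h2 : Wf a 2 (Ψ (G.connectedComponentMk (lf e))) (lidx (G.connectedComponentMk (lf e)) (lf e))
        = Wf a 2 (Ψ (G.connectedComponentMk (lf e'))) (lidx (G.connectedComponentMk (lf e')) (lf e')) := by
      omega
    obtain ⟨hΨeq, hjeq⟩ := Wf_inj (b := b) ha (Or.inr rfl)
      (hlidx_size _ _ (hlf_mem e)) (hlidx_size _ _ (hlf_mem e')) h2
    have hcc : G.connectedComponentMk (lf e) = G.connectedComponentMk (lf e') :=
      Ψ.injective hΨeq
    have h3 := hlf_mem e'
    rw [← hcc] at h3 hjeq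
    have hlf2 : lf e = lf e' := hlidx_inj _ (hlf_mem e) h3 hjeq
    apply Subtype.ext
    rw [hlf_eq e, hlf_eq e', hlf2]
  have hf_inj : Function.Injective f := by
    rintro (u | e) (v | e') h <;> simp only [hf, Sum.elim_inl, Sum.elim_inr] at h
    · rw [hg_inj h]
    · exfalso
      have h1 := hg_high u
      have h2 := hes_bound e'
      simp only [hK] at *
      omega
    · exfalso
      have h1 := hg_high v
      have h2 := hes_bound e
      simp only [hK] at *
      omega
    · have hb1 := hes_bound e
      have hb2 := hes_bound e'
      have h3 : es e.1 = es e'.1 := by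
        simp only [hK] at *
        omega
      rw [hes_inj e e' h3]
  have htarget : Fintype.card V + G.edgeSet.ncard = (lam + MM) + MM := by
    rw [hcardV, hcardE]
  refine ⟨f, ⟨K, ?_, ?_⟩, ?_⟩
  · -- bijectivity
    refine ⟨?_, fun x _ y _ h => hf_inj h, ?_⟩
    · rintro (u | e) _ <;>
        simp only [hf, Sum.elim_inl, Sum.elim_inr, Set.mem_Icc, htarget]
      · exact ⟨hg_low u, by have := hg_high u; omega⟩
      · have hb := hes_bound e
        simp only [hK] at *
        constructor <;> omega
    · have h1 : (Set.Icc 1 (Fintype.card V + G.edgeSet.ncard)).ncard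
          = (lam + MM) + MM := by
        rw [htarget, ← Finset.coe_Icc, Set.ncard_coe_finset, Nat.card_Icc]
        omega
      have h2 : (f '' Set.univ).ncard = (lam + MM) + MM := by
        rw [Set.ncard_image_of_injOn (fun x _ y _ h => hf_inj h), Set.ncard_univ,
          Nat.card_sum, Nat.card_eq_fintype_card, hcardV, Nat.card_coe_set_eq, hcardE]
      have h3 : f '' Set.univ = Set.Icc 1 (Fintype.card V + G.edgeSet.ncard) := by
        apply Set.eq_of_subset_of_ncard_le
        · rintro x ⟨y, _, rfl⟩
          rcases y with u | e <;>
            simp only [hf, Sum.elim_inl, Sum.elim_inr, Set.mem_Icc, htarget]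
          · exact ⟨hg_low u, by have := hg_high u; omega⟩
          · have hb := hes_bound e
            simp only [hK] at *
            constructor <;> omega
        · rw [h1, h2]
        · exact Set.toFinite _
      intro x hx
      rw [← h3] at hx
      exact hx
  · -- magic condition
    intro u v huv
    have he : s(u, v) ∈ G.edgeSet := (G.mem_edgeSet).mpr huv
    have h1 := (hes_bound ⟨s(u,v), he⟩).2
    have h2 : es s(u,v) = g u + g v := hes_mk u v
    simp only [hf, Sum.elim_inl, Sum.elim_inr]
    simp only at h1
    simp only [hK] at *
    omega
  · -- super condition: the vertex labels are 1..n
    have h1 : Set.range (fun v : V => f (Sum.inl v)) = g '' Set.univ := by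
      rw [Set.image_univ]
      rfl
    have h2 : (g '' Set.univ).ncard = Fintype.card V := by
      rw [Set.ncard_image_of_injOn (fun x _ y _ h => hg_inj h), Set.ncard_univ,
        Nat.card_eq_fintype_card]
    have h3 : (Set.Icc 1 (Fintype.card V)).ncard = Fintype.card V := by
      rw [← Finset.coe_Icc, Set.ncard_coe_finset, Nat.card_Icc]
      omega
    rw [h1]
    apply Set.eq_of_subset_of_ncard_le
    · rintro x ⟨y, _, rfl⟩
      simp only [Set.mem_Icc, hcardV]
      exact ⟨hg_low y, hg_high y⟩
    · rw [h2, h3]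
    · exact Set.toFinite _
end

section
/- Let 𝒞 be an odd symmetric constellation with p = 2r−1 stars and n vertices, with its stars ordered as S_1,…,S_p so that S_r is the unique star whose size occurs an odd number of times, |S_i| = |S_{p−i+1}| for every i = 1,…,r−1, and |S_i| ≤ |S_{i+1}| for every i = 1,…,r−2, and let c_i denote the center of S_i. Then 𝒞 admits a super edge-magic labeling f such that f(c_i) = i for i = 1,…,p and, whenever n > p, the smallest element of the set {f(u)+f(v) : uv ∈ E(𝒞)} equals r+p+1. -/
/-- The constellation consisting of the `p` disjoint stars `S_1, …, S_p`, where `S_i` has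
`m i` edges.  The vertices of `S_i` are `⟨i, 0⟩` (its center `c_i`) and the leaves
`⟨i, 1⟩, …, ⟨i, m i⟩`. -/
def constellationGraph (p : ℕ) (m : Fin p → ℕ) :
    SimpleGraph (Σ i : Fin p, Fin (m i + 1)) where
  Adj a b := a.1 = b.1 ∧ ((a.2.val = 0 ∧ b.2.val ≠ 0) ∨ (a.2.val ≠ 0 ∧ b.2.val = 0))
  symm := by constructor; rintro ⟨i, x⟩ ⟨j, y⟩ ⟨h1, h2⟩; exact ⟨h1.symm, by tauto⟩
  loopless := by constructor; rintro ⟨i, x⟩ ⟨-, h⟩; tauto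

open Set Function

lemma Set.BijOn.union_of_disjoint {α β : Type*} {f : α → β} {s₁ s₂ : Set α} {t₁ t₂ : Set β}
    (h₁ : BijOn f s₁ t₁) (h₂ : BijOn f s₂ t₂) (ht : Disjoint t₁ t₂) :
    BijOn f (s₁ ∪ s₂) (t₁ ∪ t₂) := by
  refine h₁.union h₂ ?_
  rintro x (hx | hx) y (hy | hy) hxy
  · exact h₁.injOn hx hy hxy
  · exact (ht.ne_of_mem (h₁.mapsTo hx) (h₂.mapsTo hy) hxy).elim
  · exact (ht.ne_of_mem (h₁.mapsTo hy) (h₂.mapsTo hx) hxy.symm).elim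
  · exact h₂.injOn hx hy hxy

lemma Set.BijOn.sumElim {α β γ : Type*} {f : α → γ} {g : β → γ} {s t : Set γ}
    (hf : BijOn f univ s) (hg : BijOn g univ t) (hst : Disjoint s t) :
    BijOn (Sum.elim f g) univ (s ∪ t) := by
  rw [← range_inl_union_range_inr, ← image_univ, ← image_univ]
  exact ((bijOn_comp_iff (g := Sum.elim f g) Sum.inl_injective.injOn).mp hf).union_of_disjoint
    ((bijOn_comp_iff (g := Sum.elim f g) Sum.inr_injective.injOn).mp hg) hst

lemma Nat.Icc_union_Icc_add_one (n N : ℕ) : Icc 1 n ∪ Icc (n + 1) (n + N) = Icc 1 (n + N) := by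
  ext; simp only [mem_union, mem_Icc]; omega

lemma Nat.disjoint_Icc_Icc_add_one (n N : ℕ) : Disjoint (Icc 1 n) (Icc (n + 1) (n + N)) :=
  disjoint_left.mpr fun _ h h' => by simp only [mem_Icc] at h h'; omega

lemma Nat.bijOn_add_Icc (a b c : ℕ) : BijOn (a + ·) (Icc b c) (Icc (a + b) (a + c)) := by
  simpa only [image_const_add_Icc] using (add_right_injective a).injOn.bijOn_image (s := Icc b c)

section EdgeSum

variable {V : Type*}

def edgeSum (g : V → ℕ) : Sym2 V → ℕ :=
  Sym2.lift ⟨fun a b => g a + g b, fun _ _ => add_comm _ _⟩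

@[simp]
lemma edgeSum_mk (g : V → ℕ) (a b : V) : edgeSum g s(a, b) = g a + g b := rfl

variable {G : SimpleGraph V} {g : V → ℕ} {s N : ℕ}

theorem isSuperEdgeMagicLabeling_of_bijOn_edgeSum [Fintype V]
    (hg : BijOn g univ (Icc 1 (Fintype.card V)))
    (he : BijOn (edgeSum g) G.edgeSet (Icc (s + 1) (s + N))) :
    IsSuperEdgeMagicLabeling G
      (Sum.elim g fun e => Fintype.card V + N + s + 1 - edgeSum g e) := by
  set n := Fintype.card V
  have hN : G.edgeSet.ncard = N := by simpa using he.ncard_eq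
  have hlabel : BijOn (fun e : G.edgeSet => n + N + s + 1 - edgeSum g e) univ
      (Icc (n + 1) (n + N)) := by
    refine ⟨fun e _ => ?_, fun e _ e' _ hee' => ?_, fun y hy => ?_⟩
    · have := he.mapsTo e.2
      simp only [mem_Icc] at this ⊢
      omega
    · have := he.mapsTo e.2
      have := he.mapsTo e'.2
      simp only [mem_Icc] at *
      exact Subtype.ext (he.injOn e.2 e'.2 (by omega))
    · simp only [mem_Icc] at hy
      obtain ⟨e, he', hey⟩ := he.surjOn (show n + N + s + 1 - y ∈ Icc (s + 1) (s + N) by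
        simp only [mem_Icc]; omega)
      exact ⟨⟨e, he'⟩, trivial, by simp only [hey]; omega⟩
  refine ⟨⟨n + N + s + 1, ?_, fun u v huv => ?_⟩, ?_⟩
  · rw [hN, ← Nat.Icc_union_Icc_add_one]
    exact hg.sumElim hlabel (Nat.disjoint_Icc_Icc_add_one n N)
  · have := he.mapsTo (G.mem_edgeSet.mpr huv)
    simp only [mem_Icc, edgeSum_mk] at this
    simp only [Sum.elim_inl, Sum.elim_inr, edgeSum_mk]
    omega
  · exact (image_univ (f := g)).symm.trans hg.image_eq

lemma isLeast_edgeSum (he : BijOn (edgeSum g) G.edgeSet (Icc (s + 1) (s + N))) (hN : 1 ≤ N) :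
    IsLeast {x | ∃ u v, G.Adj u v ∧ g u + g v = x} (s + 1) := by
  refine ⟨?_, ?_⟩
  · obtain ⟨e, he', hes⟩ := he.surjOn (show s + 1 ∈ Icc (s + 1) (s + N) by simp [hN])
    induction e using Sym2.ind with
    | h u v => exact ⟨u, v, G.mem_edgeSet.mp he', hes⟩
  · rintro x ⟨u, v, huv, rfl⟩
    exact (he.mapsTo (G.mem_edgeSet.mpr huv)).1

end EdgeSum

namespace Constellation

section Levels

variable {ι : Type*} (s : Finset ι) (m : ι → ℕ)

def level (k : ℕ) : Finset ι := {i ∈ s | k ≤ m i}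

def leavesBelow (k : ℕ) : ℕ := ∑ i ∈ s, min (m i) k

def leafSet : Set (ι × ℕ) := {x | x.1 ∈ s ∧ 1 ≤ x.2 ∧ x.2 ≤ m x.1}

lemma leavesBelow_succ (k : ℕ) :
    leavesBelow s m (k + 1) = leavesBelow s m k + (level s m (k + 1)).card := by
  rw [leavesBelow, leavesBelow, level, Finset.card_filter, ← Finset.sum_add_distrib]
  refine Finset.sum_congr rfl fun i _ => ?_
  split_ifs <;> omega

lemma leavesBelow_mono : Monotone (leavesBelow s m) :=
  fun _ _ h => Finset.sum_le_sum fun _ _ => min_le_min_left _ h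

lemma leavesBelow_le (k : ℕ) : leavesBelow s m k ≤ ∑ i ∈ s, m i :=
  Finset.sum_le_sum fun _ _ => min_le_left _ _

lemma leavesBelow_sum : leavesBelow s m (∑ i ∈ s, m i) = ∑ i ∈ s, m i :=
  Finset.sum_congr rfl fun _ hi => min_eq_left (Finset.single_le_sum (fun _ _ => Nat.zero_le _) hi)

lemma exists_leavesBelow_lt_le {y : ℕ} (hy1 : 1 ≤ y) (hy : y ≤ ∑ i ∈ s, m i) :
    ∃ k, 1 ≤ k ∧ leavesBelow s m (k - 1) < y ∧ y ≤ leavesBelow s m k := by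
  have hex : ∃ k, y ≤ leavesBelow s m k := ⟨_, (leavesBelow_sum s m).symm ▸ hy⟩
  have hk1 : 1 ≤ Nat.find hex := (Nat.find_pos hex).mpr <| by
    simp only [leavesBelow, min_zero, Finset.sum_const_zero]
    omega
  exact ⟨Nat.find hex, hk1, not_le.mp (Nat.find_min hex (by omega)), Nat.find_spec hex⟩

theorem bijOn_levelwise (q : ι × ℕ → ℕ)
    (hq : ∀ k, 1 ≤ k → BijOn (fun i => q (i, k)) (level s m k) (Icc 1 (level s m k).card)) :
    BijOn (fun x => leavesBelow s m (x.2 - 1) + q x) (leafSet s m) (Icc 1 (∑ i ∈ s, m i)) := by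
  have hstep : ∀ k, 1 ≤ k → leavesBelow s m k = leavesBelow s m (k - 1) + (level s m k).card :=
    fun k hk => by simpa [Nat.sub_add_cancel hk] using leavesBelow_succ s m (k - 1)
  have hlevel : ∀ x ∈ leafSet s m, x.1 ∈ level s m x.2 :=
    fun x hx => Finset.mem_filter.mpr ⟨hx.1, hx.2.2⟩
  have hblock : ∀ x ∈ leafSet s m,
      1 ≤ q x ∧ leavesBelow s m (x.2 - 1) + q x ≤ leavesBelow s m x.2 := by
    intro x hx
    have : q x ∈ Icc 1 (level s m x.2).card := (hq x.2 hx.2.1).mapsTo (hlevel x hx)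
    simp only [mem_Icc] at this
    rw [hstep x.2 hx.2.1]
    omega
  refine ⟨fun x hx => ?_, fun x hx y hy hxy => ?_, fun y hy => ?_⟩
  · have := hblock x hx
    have := leavesBelow_le s m x.2
    simp only [mem_Icc]
    omega
  · have hx' := hblock x hx
    have hy' := hblock y hy
    simp only at hxy
    have hk : x.2 = y.2 := by
      by_contra hne
      rcases Nat.lt_or_gt_of_ne hne with h | h
      · have := leavesBelow_mono s m (show x.2 ≤ y.2 - 1 by omega)
        omega
      · have := leavesBelow_mono s m (show y.2 ≤ x.2 - 1 by omega)
        omega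
    have hqxy : q x = q y := by rw [hk] at hxy; omega
    refine Prod.ext ((hq x.2 hx.2.1).injOn (hlevel x hx) (hk ▸ hlevel y hy) ?_) hk
    change q x = q (y.1, x.2)
    rw [hk, hqxy]
  · obtain ⟨k, hk1, hprev, hk⟩ := exists_leavesBelow_lt_le s m hy.1 hy.2
    rw [hstep k hk1] at hk
    obtain ⟨i, hi, hqi⟩ := (hq k hk1).surjOn
      (show y - leavesBelow s m (k - 1) ∈ Icc 1 (level s m k).card by simp only [mem_Icc]; omega)
    obtain ⟨his, hik⟩ := Finset.mem_filter.mp hi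
    exact ⟨(i, k), ⟨his, hk1, hik⟩, by simp only at hqi ⊢; omega⟩

end Levels

lemma le_iff_sub_card_level_le {n : ℕ} {m : ℕ → ℕ} (hm : MonotoneOn m (Iio n)) {i : ℕ}
    (hi : i < n) (k : ℕ) : k ≤ m i ↔ n - (level (Finset.range n) m k).card ≤ i := by
  constructor
  · intro hk
    have : Finset.Ico i n ⊆ level (Finset.range n) m k := fun j hj => by
      obtain ⟨hij, hjn⟩ := Finset.mem_Ico.mp hj
      exact Finset.mem_filter.mpr ⟨Finset.mem_range.mpr hjn, hk.trans (hm hi hjn hij)⟩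
    have := Finset.card_le_card this
    simp only [Nat.card_Ico] at this
    omega
  · intro hcard
    by_contra hk
    have : level (Finset.range n) m k ⊆ Finset.Ico (i + 1) n := fun j hj => by
      obtain ⟨hjn, hkj⟩ := Finset.mem_filter.mp hj
      rw [Finset.mem_range] at hjn
      refine Finset.mem_Ico.mpr ⟨Nat.lt_of_not_le fun hji => hk ?_, hjn⟩
      exact hkj.trans (hm hjn hi hji)
    have := Finset.card_le_card this
    simp only [Nat.card_Ico] at this
    omega

/-- In a round whose active stars are `r-1-u, …, r-1+u` (0-based, the middle star `r-1` possibly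
missing), the stars are numbered upper half first, then lower half, then the middle star; the
corresponding edge positions `roundEdgePos` are then the even numbers for the upper half and the odd
numbers for the rest. -/
def roundPos (r u I : ℕ) : ℕ :=
  if r ≤ I then I + 1 - r else if I + 1 = r then 2 * u + 1 else 2 * u + I + 2 - r

def roundEdgePos (r u I : ℕ) : ℕ := roundPos r u I + I + 1 - r

section Window

variable {r u ε : ℕ} {A : Set ℕ} (hu : u ≤ r - 1) (hε : ε ≤ 1)
  (hA : ∀ I, I ∈ A ↔ r - 1 - u ≤ I ∧ I ≤ r - 1 + u ∧ (I = r - 1 → ε = 1))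
include hu hε hA

lemma bijOn_roundPos : BijOn (roundPos r u) A (Icc 1 (2 * u + ε)) := by
  refine ⟨fun I hI => ?_, fun I hI J hJ hIJ => ?_, fun y hy => ?_⟩
  · have := (hA I).mp hI
    simp only [roundPos, mem_Icc]
    split_ifs <;> omega
  · have := (hA I).mp hI
    have := (hA J).mp hJ
    simp only [roundPos] at hIJ
    split_ifs at hIJ <;> omega
  · simp only [mem_Icc] at hy
    obtain ⟨I, hI⟩ : ∃ I, r - 1 - u ≤ I ∧ I ≤ r - 1 + u ∧ (I = r - 1 → ε = 1) ∧
        roundPos r u I = y := by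
      by_cases hyu : y ≤ u
      · exact ⟨r - 1 + y, by simp only [roundPos]; split_ifs <;> omega⟩
      by_cases hy2u : y ≤ 2 * u
      · exact ⟨y + r - 2 - 2 * u, by simp only [roundPos]; split_ifs <;> omega⟩
      · exact ⟨r - 1, by simp only [roundPos]; split_ifs <;> omega⟩
    exact ⟨I, (hA I).mpr ⟨hI.1, hI.2.1, hI.2.2.1⟩, hI.2.2.2⟩

lemma bijOn_roundEdgePos (hr : 1 ≤ r) : BijOn (roundEdgePos r u) A (Icc 1 (2 * u + ε)) := by
  refine ⟨fun I hI => ?_, fun I hI J hJ hIJ => ?_, fun y hy => ?_⟩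
  · have := (hA I).mp hI
    simp only [roundEdgePos, roundPos, mem_Icc]
    split_ifs <;> omega
  · have := (hA I).mp hI
    have := (hA J).mp hJ
    simp only [roundEdgePos, roundPos] at hIJ
    split_ifs at hIJ <;> omega
  · simp only [mem_Icc] at hy
    obtain ⟨I, hI⟩ : ∃ I, r - 1 - u ≤ I ∧ I ≤ r - 1 + u ∧ (I = r - 1 → ε = 1) ∧
        roundEdgePos r u I = y := by
      rcases Nat.even_or_odd' y with ⟨j, rfl | rfl⟩
      · exact ⟨r - 1 + j, by simp only [roundEdgePos, roundPos]; split_ifs <;> omega⟩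
      by_cases hju : j < u
      · exact ⟨r - 1 - u + j, by simp only [roundEdgePos, roundPos]; split_ifs <;> omega⟩
      · exact ⟨r - 1, by simp only [roundEdgePos, roundPos]; split_ifs <;> omega⟩
    exact ⟨I, (hA I).mpr ⟨hI.1, hI.2.1, hI.2.2.1⟩, hI.2.2.2⟩

end Window

section Rounds

def lowerCount (r : ℕ) (m : ℕ → ℕ) (k : ℕ) : ℕ := (level (Finset.range (r - 1)) m k).card

lemma lowerCount_le (r : ℕ) (m : ℕ → ℕ) (k : ℕ) : lowerCount r m k ≤ r - 1 :=
  (Finset.card_filter_le _ _).trans (Finset.card_range _).le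

def leafPos (r : ℕ) (m : ℕ → ℕ) (x : ℕ × ℕ) : ℕ :=
  leavesBelow (Finset.range (2 * r - 1)) m (x.2 - 1) + roundPos r (lowerCount r m x.2) x.1

def leafEdgePos (r : ℕ) (m : ℕ → ℕ) (x : ℕ × ℕ) : ℕ :=
  leavesBelow (Finset.range (2 * r - 1)) m (x.2 - 1) + roundEdgePos r (lowerCount r m x.2) x.1

variable {r : ℕ} {m : ℕ → ℕ} (hmono : MonotoneOn m (Iio (r - 1)))
  (hmir : ∀ j ≤ r - 1, m (r - 1 + j) = m (r - 1 - j))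
include hmono hmir

lemma mem_level_iff_window (hr : 1 ≤ r) (k I : ℕ) :
    I ∈ level (Finset.range (2 * r - 1)) m k ↔ r - 1 - lowerCount r m k ≤ I ∧
      I ≤ r - 1 + lowerCount r m k ∧ (I = r - 1 → (if k ≤ m (r - 1) then 1 else 0) = 1) := by
  have hu := lowerCount_le r m k
  simp only [level, Finset.mem_filter, Finset.mem_range]
  rcases lt_trichotomy I (r - 1) with hI | rfl | hI
  · have := le_iff_sub_card_level_le hmono hI k
    rw [lowerCount] at hu ⊢
    omega
  · split_ifs <;> grind
  · by_cases hIp : I < 2 * r - 1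
    · have hmirI : m I = m (r - 1 - (I - (r - 1))) := by
        rw [← hmir _ (by omega), Nat.add_sub_cancel' hI.le]
      have := le_iff_sub_card_level_le hmono (i := r - 1 - (I - (r - 1))) (by omega) k
      rw [lowerCount] at hu ⊢
      rw [hmirI]
      omega
    · omega

lemma card_level (hr : 1 ≤ r) (k : ℕ) : (level (Finset.range (2 * r - 1)) m k).card =
    2 * lowerCount r m k + if k ≤ m (r - 1) then 1 else 0 := by
  have h := (bijOn_roundPos (lowerCount_le r m k) (by split_ifs <;> omega)
    (mem_level_iff_window hmono hmir hr k)).ncard_eq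
  rwa [Set.ncard_coe_finset, ncard_Icc_nat, Nat.add_sub_cancel] at h

lemma bijOn_roundPos_level (hr : 1 ≤ r) (k : ℕ) :
    BijOn (roundPos r (lowerCount r m k)) (level (Finset.range (2 * r - 1)) m k)
      (Icc 1 (level (Finset.range (2 * r - 1)) m k).card) := by
  rw [card_level hmono hmir hr]
  exact bijOn_roundPos (lowerCount_le r m k) (by split_ifs <;> omega)
    (mem_level_iff_window hmono hmir hr k)

lemma bijOn_roundEdgePos_level (hr : 1 ≤ r) (k : ℕ) :
    BijOn (roundEdgePos r (lowerCount r m k)) (level (Finset.range (2 * r - 1)) m k)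
      (Icc 1 (level (Finset.range (2 * r - 1)) m k).card) := by
  rw [card_level hmono hmir hr]
  exact bijOn_roundEdgePos (lowerCount_le r m k) (by split_ifs <;> omega)
    (mem_level_iff_window hmono hmir hr k) hr

lemma bijOn_leafPos (hr : 1 ≤ r) :
    BijOn (leafPos r m) (leafSet (Finset.range (2 * r - 1)) m)
    (Icc 1 (∑ i ∈ Finset.range (2 * r - 1), m i)) :=
  bijOn_levelwise _ m _ fun k _ => bijOn_roundPos_level hmono hmir hr k

lemma bijOn_leafEdgePos (hr : 1 ≤ r) :
    BijOn (leafEdgePos r m) (leafSet (Finset.range (2 * r - 1)) m)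
    (Icc 1 (∑ i ∈ Finset.range (2 * r - 1), m i)) :=
  bijOn_levelwise _ m _ fun k _ => bijOn_roundEdgePos_level hmono hmir hr k

lemma leafPos_add (hr : 1 ≤ r) {x : ℕ × ℕ} (hx : x ∈ leafSet (Finset.range (2 * r - 1)) m) :
    leafPos r m x + x.1 + 1 = r + leafEdgePos r m x := by
  have := (mem_level_iff_window hmono hmir hr x.2 x.1).mp (Finset.mem_filter.mpr ⟨hx.1, hx.2.2⟩)
  simp only [leafPos, leafEdgePos, roundEdgePos, roundPos] at this ⊢
  split_ifs <;> omega

end Rounds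

section Labeling

variable {p : ℕ} {m : Fin p → ℕ}

def natSizes (m : Fin p → ℕ) (i : ℕ) : ℕ := if h : i < p then m ⟨i, h⟩ else 0

lemma natSizes_val (m : Fin p → ℕ) (i : Fin p) : natSizes m i = m i := dif_pos i.2

lemma card_constellation :
    Fintype.card (Σ i : Fin p, Fin (m i + 1)) = p + ∑ i ∈ Finset.range p, natSizes m i := by
  rw [Fintype.card_sigma, ← Fin.sum_univ_eq_sum_range]
  simp [natSizes_val, Finset.sum_add_distrib, add_comm]

lemma monotoneOn_natSizes {n : ℕ} (hn : n ≤ p)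
    (h : ∀ i j : Fin p, (i : ℕ) + 1 < n → (j : ℕ) = i + 1 → m i ≤ m j) :
    MonotoneOn (natSizes m) (Iio n) := by
  refine monotoneOn_of_le_succ ordConnected_Iio fun a _ ha hsa => ?_
  rw [mem_Iio] at ha hsa
  rw [Order.succ_eq_add_one] at hsa ⊢
  rw [natSizes, natSizes, dif_pos (by omega), dif_pos (by omega)]
  exact h _ _ hsa rfl

def starLabel (m : Fin p → ℕ) (q : ℕ × ℕ → ℕ) (v : Σ i : Fin p, Fin (m i + 1)) : ℕ :=
  if (v.2 : ℕ) = 0 then v.1 + 1 else p + q (v.1, v.2)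

lemma starLabel_center (q : ℕ × ℕ → ℕ) (i : Fin p) : starLabel m q ⟨i, 0⟩ = i + 1 := if_pos rfl

lemma coords_injective :
    Injective fun v : Σ i : Fin p, Fin (m i + 1) => ((v.1 : ℕ), (v.2 : ℕ)) := by
  rintro ⟨⟨i, hi⟩, ⟨a, ha⟩⟩ ⟨⟨j, hj⟩, ⟨b, hb⟩⟩ h
  obtain ⟨rfl, rfl⟩ := Prod.mk.inj h
  rfl

lemma bijOn_coords_leaves : BijOn (fun v : Σ i : Fin p, Fin (m i + 1) => ((v.1 : ℕ), (v.2 : ℕ)))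
    {v | (v.2 : ℕ) ≠ 0} (leafSet (Finset.range p) (natSizes m)) := by
  refine ⟨fun v hv => ?_, coords_injective.injOn, fun x ⟨hx1, hx2, hx3⟩ => ?_⟩
  · have := v.2.2
    refine ⟨Finset.mem_range.mpr v.1.2, Nat.one_le_iff_ne_zero.mpr hv, ?_⟩
    simp only [natSizes_val]
    omega
  · rw [Finset.mem_range] at hx1
    rw [natSizes, dif_pos hx1] at hx3
    exact ⟨⟨⟨x.1, hx1⟩, ⟨x.2, by omega⟩⟩, by simp only [mem_ofPred_eq]; omega, rfl⟩

lemma bijOn_centerEdge : BijOn (fun v : Σ i : Fin p, Fin (m i + 1) => s(⟨v.1, 0⟩, v))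
    {v | (v.2 : ℕ) ≠ 0} (constellationGraph p m).edgeSet := by
  refine ⟨fun v hv => ⟨rfl, Or.inl ⟨rfl, hv⟩⟩, fun v hv w hw h => ?_, fun e he => ?_⟩
  · rcases Sym2.eq_iff.mp h with ⟨-, h⟩ | ⟨h, -⟩
    · exact h
    · exact (hw (congrArg (fun v => (v.2 : ℕ)) h).symm).elim
  · induction e using Sym2.ind with
    | h a b =>
      obtain ⟨hab, ⟨ha, hb⟩ | ⟨ha, hb⟩⟩ := (constellationGraph p m).mem_edgeSet.mp he
      · refine ⟨b, hb, ?_⟩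
        rw [show a = ⟨b.1, 0⟩ from coords_injective (by simp [hab, ha])]
      · refine ⟨a, ha, ?_⟩
        rw [show b = ⟨a.1, 0⟩ from coords_injective (by simp [hab, hb]), Sym2.eq_swap]

variable {q q' : ℕ × ℕ → ℕ} {c : ℕ}

lemma bijOn_starLabel
    (hq : BijOn q (leafSet (Finset.range p) (natSizes m))
      (Icc 1 (∑ i ∈ Finset.range p, natSizes m i))) :
    BijOn (starLabel m q) univ (Icc 1 (Fintype.card (Σ i : Fin p, Fin (m i + 1)))) := by
  have hcenters : BijOn (starLabel m q) {v | (v.2 : ℕ) = 0} (Icc 1 p) := by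
    refine ⟨fun v hv => ?_, fun v hv w hw h => ?_, fun y hy => ?_⟩
    · simp only [mem_ofPred_eq] at hv
      have := v.1.2
      simp only [starLabel, hv, if_true, mem_Icc]
      omega
    · simp only [mem_ofPred_eq] at hv hw
      simp only [starLabel, hv, hw, if_true] at h
      apply coords_injective
      simp only [hv, hw, Prod.mk.injEq, and_true]
      omega
    · simp only [mem_Icc] at hy
      exact ⟨⟨⟨y - 1, by omega⟩, 0⟩, rfl, by simp only [starLabel, Fin.val_zero, if_true]; omega⟩
  have hleaves : BijOn (starLabel m q) {v | (v.2 : ℕ) ≠ 0}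
      (Icc (p + 1) (p + ∑ i ∈ Finset.range p, natSizes m i)) :=
    ((Nat.bijOn_add_Icc p _ _).comp (hq.comp bijOn_coords_leaves)).congr fun v hv => by
      simp only [mem_ofPred_eq] at hv
      simp [starLabel, hv]
  rw [card_constellation, ← Nat.Icc_union_Icc_add_one,
    ← union_compl_self {v : Σ i : Fin p, Fin (m i + 1) | (v.2 : ℕ) = 0}]
  exact hcenters.union_of_disjoint hleaves (Nat.disjoint_Icc_Icc_add_one _ _)

lemma bijOn_edgeSum_starLabel
    (hq' : BijOn q' (leafSet (Finset.range p) (natSizes m))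
      (Icc 1 (∑ i ∈ Finset.range p, natSizes m i)))
    (hqq' : ∀ x ∈ leafSet (Finset.range p) (natSizes m), q x + x.1 + 1 = c + q' x) :
    BijOn (edgeSum (starLabel m q)) (constellationGraph p m).edgeSet
      (Icc (c + p + 1) (c + p + ∑ i ∈ Finset.range p, natSizes m i)) := by
  rw [← bijOn_centerEdge.image_eq, ← bijOn_comp_iff bijOn_centerEdge.injOn]
  refine ((Nat.bijOn_add_Icc (c + p) _ _).comp (hq'.comp bijOn_coords_leaves)).congr fun v hv => ?_
  have := hqq' _ (bijOn_coords_leaves.mapsTo hv)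
  simp only [mem_ofPred_eq] at hv
  simp only [comp_apply, edgeSum_mk, starLabel, hv, Fin.val_zero, if_true, if_false]
  omega

end Labeling

end Constellation

open Constellation

/-- Let `𝒞` be an odd symmetric constellation with `p = 2r−1` stars
`S_1,…,S_p` (star `S_{i+1}` having `m i` edges, indices 0-based) ordered so that `S_r` is the
unique star whose size occurs an odd number of times, `|S_i| = |S_{p−i+1}|` for `i = 1,…,r−1`,
and `|S_i| ≤ |S_{i+1}|` for `i = 1,…,r−2`.  Then `𝒞` admits a super edge-magic labeling `f`
with `f(c_i) = i` for `i = 1,…,p` and, whenever `n > p`, the smallest element of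
`{f(u)+f(v) : uv ∈ E(𝒞)}` equals `r+p+1`. -/
theorem standard_labeling_of_odd_symmetric_constellation
    (r p : ℕ) (hr : 1 ≤ r) (hp : p = 2 * r - 1) (m : Fin p → ℕ)
    (hmirror : ∀ i j : Fin p, i.val + 1 ≤ r - 1 → i.val + j.val = p - 1 → m i = m j)
    (hmono : ∀ i j : Fin p, i.val + 1 ≤ r - 2 → j.val = i.val + 1 → m i ≤ m j) :
    ∃ f : (Σ i : Fin p, Fin (m i + 1)) ⊕ ↥(constellationGraph p m).edgeSet → ℕ,
      IsSuperEdgeMagicLabeling (constellationGraph p m) f ∧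
      (∀ i : Fin p, f (Sum.inl ⟨i, 0⟩) = i.val + 1) ∧
      (Fintype.card (Σ i : Fin p, Fin (m i + 1)) > p →
        IsLeast {x : ℕ | ∃ u v : Σ i : Fin p, Fin (m i + 1),
            (constellationGraph p m).Adj u v ∧ f (Sum.inl u) + f (Sum.inl v) = x}
          (r + p + 1)) := by
  subst hp
  have hsorted : MonotoneOn (natSizes m) (Iio (r - 1)) :=
    monotoneOn_natSizes (by omega) fun i j hi hj => hmono i j (by omega) hj
  have hsymm : ∀ j ≤ r - 1, natSizes m (r - 1 + j) = natSizes m (r - 1 - j) := by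
    intro j hj
    rcases Nat.eq_zero_or_pos j with rfl | hj0
    · rfl
    rw [natSizes, natSizes, dif_pos (by omega), dif_pos (by omega)]
    exact (hmirror ⟨r - 1 - j, by omega⟩ ⟨r - 1 + j, by omega⟩ (by simp only; omega)
      (by simp only; omega)).symm
  have hE := bijOn_edgeSum_starLabel (q := leafPos r (natSizes m))
    (bijOn_leafEdgePos hsorted hsymm hr) fun x hx => leafPos_add hsorted hsymm hr hx
  refine ⟨_, isSuperEdgeMagicLabeling_of_bijOn_edgeSum
    (bijOn_starLabel (bijOn_leafPos hsorted hsymm hr)) hE, starLabel_center _, fun hn => ?_⟩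
  rw [card_constellation] at hn
  exact isLeast_edgeSum hE (by omega)
end

section
/- Every odd uniform army of caterpillars admits an edge-magic labeling. -/
/-- A caterpillar: a tree having a path such that every vertex is on the path or adjacent
to a vertex of the path. -/
def IsCaterpillar {V : Type*} (G : SimpleGraph V) : Prop :=
  G.IsTree ∧ ∃ (a b : V) (W : G.Walk a b), W.IsPath ∧
    ∀ v : V, v ∈ W.support ∨ ∃ u ∈ W.support, G.Adj u v

/-- A bipartite graph has type `(r, s)` if the two parts of its bipartition have sizes
`r` and `s` with `r ≤ s`. -/
def HasType {V : Type*} (G : SimpleGraph V) (r s : ℕ) : Prop :=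
  r ≤ s ∧ ∃ A : Set V, A.ncard = r ∧ Aᶜ.ncard = s ∧
    ∀ u v : V, G.Adj u v → (u ∈ A ↔ v ∉ A)

/-!
Say the army has `t = 2h + 1` caterpillars with `p = r + s` vertices each. In one caterpillar,
number the `r` vertices of one side by `1, …, r` and the `s` others by `r + 1, …, p`, both in
the order of the spine, a leaf taking the place of its spine vertex. Then no two edges cross,
so the `p - 1` edge sums are distinct.

Give the vertex numbered `a` of the `i`-th caterpillar the label `(2h + 1)(a - 1) + i + 1` if
`a ≤ r` and `(2h + 1)(a - 1) + σ i + 1` otherwise, where `σ i = i + h + 1 mod 2h + 1`. As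
`i + σ i` runs through `h, …, 3h` once each, the `t (p - 1)` edge sums of the army are distinct
and lie in an interval of that length, and labelling each edge by a constant minus its sum is
edge-magic.
-/

open SimpleGraph Finset

namespace Finset

variable {α β : Type*} [LinearOrder β] {s : Finset α} {F : α → β} {u v : α}

def rankBy (s : Finset α) (F : α → β) (v : α) : ℕ := #{u ∈ s | F u ≤ F v}

lemma one_le_rankBy (hv : v ∈ s) : 1 ≤ s.rankBy F v :=
  card_pos.2 ⟨v, mem_filter.2 ⟨hv, le_rfl⟩⟩

lemma rankBy_le_card : s.rankBy F v ≤ #s :=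
  card_filter_le _ _

lemma rankBy_lt_rankBy (hv : v ∈ s) (h : F u < F v) : s.rankBy F u < s.rankBy F v := by
  refine card_lt_card ((ssubset_iff_of_subset fun x hx => ?_).2 ⟨v, ?_, ?_⟩)
  · simp only [mem_filter] at hx ⊢
    exact ⟨hx.1, hx.2.trans h.le⟩
  · simpa using hv
  · simpa [hv] using h

lemma rankBy_injOn (hF : F.Injective) : Set.InjOn (s.rankBy F) s := by
  intro u hu v hv huv
  rcases lt_trichotomy (F u) (F v) with h | h | h
  · exact absurd huv (rankBy_lt_rankBy hv h).ne
  · exact hF h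
  · exact absurd huv (rankBy_lt_rankBy hu h).ne'

end Finset

theorem exists_labeling_strictMono_on_parts {W : Type*} [Fintype W] (A : Set W) (key : W → ℕ) :
    ∃ g : W → ℕ, g.Injective ∧ (∀ v, g v ∈ Set.Icc 1 (Fintype.card W)) ∧
      (∀ v, g v ≤ A.ncard ↔ v ∈ A) ∧
      ∀ ⦃u v⦄, (u ∈ A ↔ v ∈ A) → key u < key v → g u < g v := by
  classical
  let F : W → ℕ ×ₗ Fin (Fintype.card W) := fun v => toLex (key v, Fintype.equivFin W v)
  have hF : F.Injective := fun u v h =>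
    (Fintype.equivFin W).injective (congrArg (fun x => (ofLex x).2) h)
  have hFlt : ∀ ⦃u v⦄, key u < key v → F u < F v := fun u v h =>
    Prod.Lex.toLex_lt_toLex.2 (Or.inl h)
  have hA : A.ncard = #A.toFinset := Set.ncard_eq_toFinset_card' A
  have hcard : #A.toFinset + #Aᶜ.toFinset = Fintype.card W := by
    rw [Set.toFinset_compl, card_add_card_compl]
  let g : W → ℕ := fun v =>
    if v ∈ A then A.toFinset.rankBy F v else A.ncard + Aᶜ.toFinset.rankBy F v
  have hgA : ∀ {v}, v ∈ A → g v = A.toFinset.rankBy F v := fun hv => if_pos hv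
  have hgB : ∀ {v}, v ∉ A → g v = A.ncard + Aᶜ.toFinset.rankBy F v := fun hv => if_neg hv
  have hlow : ∀ {v}, v ∈ A → 1 ≤ g v ∧ g v ≤ A.ncard := fun {v} hv => by
    rw [hgA hv, hA]
    exact ⟨one_le_rankBy (by simpa using hv), rankBy_le_card⟩
  have hhigh : ∀ {v}, v ∉ A → A.ncard < g v ∧ g v ≤ Fintype.card W := fun {v} hv => by
    rw [hgB hv]
    have := one_le_rankBy (s := Aᶜ.toFinset) (F := F) (by simpa using hv)
    have := rankBy_le_card (s := Aᶜ.toFinset) (F := F) (v := v)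
    omega
  refine ⟨g, fun u v huv => ?_, fun v => ?_, fun v => ?_, fun u v hside hkey => ?_⟩
  · by_cases hu : u ∈ A <;> by_cases hv : v ∈ A
    · rw [hgA hu, hgA hv] at huv
      exact rankBy_injOn hF (by simpa using hu) (by simpa using hv) huv
    · exact absurd huv ((hlow hu).2.trans_lt (hhigh hv).1).ne
    · exact absurd huv ((hlow hv).2.trans_lt (hhigh hu).1).ne'
    · rw [hgB hu, hgB hv, Nat.add_left_cancel_iff] at huv
      exact rankBy_injOn hF (by simpa using hu) (by simpa using hv) huv
  · by_cases hv : v ∈ A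
    · have := hlow hv
      constructor <;> omega
    · have := hhigh hv
      constructor <;> omega
  · by_cases hv : v ∈ A
    · exact iff_of_true (hlow hv).2 hv
    · exact iff_of_false (not_le.2 (hhigh hv).1) hv
  · by_cases hv : v ∈ A
    · rw [hgA (hside.2 hv), hgA hv]
      exact rankBy_lt_rankBy (by simpa using hv) (hFlt hkey)
    · have hu : u ∉ A := fun hu => hv (hside.1 hu)
      rw [hgB hu, hgB hv, Nat.add_lt_add_iff_left]
      exact rankBy_lt_rankBy (by simpa using hv) (hFlt hkey)

namespace SimpleGraph

variable {W : Type*} {H : SimpleGraph W}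

lemma IsAcyclic.dist_eq_length (hH : H.IsAcyclic) {u v : W} {p : H.Walk u v} (hp : p.IsPath) :
    H.dist u v = p.length := by
  obtain ⟨q, hq, hql⟩ := p.reachable.exists_path_of_dist
  rw [← hql, Subtype.mk.inj ((hH.subsingleton_path u v).elim ⟨q, hq⟩ ⟨p, hp⟩)]

lemma IsAcyclic.getVert_dist (hH : H.IsAcyclic) {a b v : W} {P : H.Walk a b} (hP : P.IsPath)
    (hv : v ∈ P.support) : P.getVert (H.dist a v) = v := by
  classical
  rw [hH.dist_eq_length (hP.takeUntil hv), P.getVert_length_takeUntil hv]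

lemma Walk.IsPath.exists_isPath_through {a b w z : W} {P : H.Walk a b} (hP : P.IsPath)
    (hw : w ∈ P.support) (hz : z ∈ P.support) :
    ∃ (x : W) (Q : H.Walk w x), Q.IsPath ∧ z ∈ Q.support ∧ Q.support ⊆ P.support := by
  classical
  rw [← P.take_spec hw, Walk.mem_support_append_iff] at hz
  rcases hz with hz | hz
  · exact ⟨a, (P.takeUntil w hw).reverse, (hP.takeUntil hw).reverse, by simpa using hz,
      fun y hy => P.support_takeUntil_subset_support hw (by simpa using hy)⟩
  · exact ⟨b, P.dropUntil w hw, hP.dropUntil hw, hz, P.support_dropUntil_subset_support hw⟩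

lemma IsAcyclic.eq_of_adj_of_notMem_support (hH : H.IsAcyclic) {a b u v w : W}
    {P : H.Walk a b} (hP : P.IsPath) (hdom : ∀ v, v ∈ P.support ∨ ∃ u ∈ P.support, H.Adj u v)
    (hu : u ∉ P.support) (hw : w ∈ P.support) (huw : H.Adj u w) (huv : H.Adj u v) :
    v = w := by
  by_cases hv : v ∈ P.support
  · obtain ⟨x, Q, hQ, hvQ, hQP⟩ := hP.exists_isPath_through hw hv
    have hR : (Walk.cons huw Q).IsPath := hQ.cons fun h => hu (hQP h)
    simpa using hH.eq_snd_of_adj_start hR huv (by simp [hvQ])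
  · obtain ⟨z, hz, hzv⟩ := (hdom v).resolve_left hv
    obtain ⟨x, Q, hQ, hzQ, hQP⟩ := hP.exists_isPath_through hw hz
    have hR : (Walk.cons huv.symm (Walk.cons huw Q)).IsPath := by
      refine (hQ.cons fun h => hu (hQP h)).cons ?_
      simp only [Walk.support_cons, List.mem_cons, not_or]
      exact ⟨huv.ne', fun h => hv (hQP h)⟩
    have := hH.eq_snd_of_adj_start hR hzv.symm (by simp [hzQ])
    simp only [Walk.snd_cons] at this
    exact absurd (this ▸ hz) hu

lemma sym2_eq_of_add_eq_of_oriented {P : W → Prop} (hP : ∀ ⦃u v⦄, H.Adj u v → P u ∨ P v)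
    (F : W → ℕ)
    (h : ∀ ⦃x y x' y'⦄, P x → P x' → H.Adj x y → H.Adj x' y' →
      F x + F y = F x' + F y' → s(x, y) = s(x', y'))
    ⦃u v u' v' : W⦄ (huv : H.Adj u v) (hu'v' : H.Adj u' v') (hsum : F u + F v = F u' + F v') :
    s(u, v) = s(u', v') := by
  have orient : ∀ ⦃u v⦄, H.Adj u v →
      ∃ x y, P x ∧ H.Adj x y ∧ s(u, v) = s(x, y) ∧ F u + F v = F x + F y := by
    intro u v huv
    rcases hP huv with hu | hv
    · exact ⟨u, v, hu, huv, rfl, rfl⟩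
    · exact ⟨v, u, hv, huv.symm, Sym2.eq_swap, add_comm _ _⟩
  obtain ⟨x, y, hx, hxy, he, hs⟩ := orient huv
  obtain ⟨x', y', hx', hxy', he', hs'⟩ := orient hu'v'
  rw [he, he']
  exact h hx hx' hxy hxy' (by omega)

end SimpleGraph

section SpineLayout

variable {W : Type*} {H : SimpleGraph W}

/-- `key` numbers the spine `S` injectively; every other vertex is a leaf carrying the number of
the spine vertex it hangs from. -/
structure IsSpineLayout (H : SimpleGraph W) (S : Set W) (key : W → ℕ) : Prop where
  injOn : Set.InjOn key S
  le_succ_of_adj : ∀ ⦃u v⦄, H.Adj u v → key u ≤ key v + 1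
  mem_of_adj_of_notMem : ∀ ⦃u v⦄, H.Adj u v → u ∉ S → v ∈ S ∧ key v = key u

theorem IsCaterpillar.exists_isSpineLayout (hH : IsCaterpillar H) :
    ∃ S key, IsSpineLayout H S key := by
  classical
  obtain ⟨htree, a, b, P, hP, hdom⟩ := hH
  choose! nb hnbS hnbadj using fun v (hv : v ∉ P.support) => (hdom v).resolve_left hv
  have hleaf : ∀ ⦃u v⦄, H.Adj u v → u ∉ P.support → v = nb u := fun u v huv hu =>
    htree.isAcyclic.eq_of_adj_of_notMem_support hP hdom hu (hnbS u hu) (hnbadj u hu).symm huv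
  refine ⟨{v | v ∈ P.support}, fun v => H.dist a (if v ∈ P.support then v else nb v),
    ⟨?_, ?_, ?_⟩⟩
  · intro u (hu : u ∈ P.support) v (hv : v ∈ P.support) huv
    simp only [hu, hv, if_true] at huv
    rw [← htree.isAcyclic.getVert_dist hP hu, huv, htree.isAcyclic.getVert_dist hP hv]
  · intro u v huv
    by_cases hu : u ∈ P.support
    · by_cases hv : v ∈ P.support
      · simp only [hu, hv, if_true]
        have := htree.dist_eq_dist_add_one_of_adj a huv
        omega
      · simp [hu, hv, ← hleaf huv.symm hv]
    · simp [hu, (hleaf huv hu ▸ hnbS u hu : v ∈ P.support), ← hleaf huv hu]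
  · intro u v huv (hu : u ∉ P.support)
    have hv := hleaf huv hu ▸ hnbS u hu
    simp [hu, hv, ← hleaf huv hu]

namespace IsSpineLayout

variable {S : Set W} {key : W → ℕ} {A : Set W}

lemma mem_of_adj_of_key_ne (hL : IsSpineLayout H S key) {u v : W} (huv : H.Adj u v)
    (hne : key u ≠ key v) : u ∈ S :=
  by_contra fun hu => hne (hL.mem_of_adj_of_notMem huv hu).2.symm

lemma eq_of_adj_of_key_eq (hL : IsSpineLayout H S key)
    (hA : ∀ u v, H.Adj u v → (u ∈ A ↔ v ∉ A)) {x x' y y' : W} (hne : x ≠ x')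
    (hkey : key x = key x') (hside : x ∈ A ↔ x' ∈ A) (hxy : H.Adj x y) (hxy' : H.Adj x' y') :
    y = y' := by
  by_cases hx : x ∈ S <;> by_cases hx' : x' ∈ S
  · exact absurd (hL.injOn hx hx' hkey) hne
  · obtain ⟨hy'S, hy'key⟩ := hL.mem_of_adj_of_notMem hxy' hx'
    obtain rfl : y' = x := hL.injOn hy'S hx (hy'key.trans hkey.symm)
    have := hA _ _ hxy'
    tauto
  · obtain ⟨hyS, hykey⟩ := hL.mem_of_adj_of_notMem hxy hx
    obtain rfl : y = x' := hL.injOn hyS hx' (hykey.trans hkey)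
    have := hA _ _ hxy
    tauto
  · obtain ⟨hyS, hykey⟩ := hL.mem_of_adj_of_notMem hxy hx
    obtain ⟨hy'S, hy'key⟩ := hL.mem_of_adj_of_notMem hxy' hx'
    exact hL.injOn hyS hy'S (by rw [hykey, hy'key, hkey])

lemma le_of_lt_of_adj (hL : IsSpineLayout H S key) (hA : ∀ u v, H.Adj u v → (u ∈ A ↔ v ∉ A))
    {g : W → ℕ} (hmono : ∀ ⦃u v⦄, (u ∈ A ↔ v ∈ A) → key u < key v → g u < g v)
    {x y x' y' : W} (hx : x ∈ A) (hx' : x' ∈ A) (hxy : H.Adj x y) (hxy' : H.Adj x' y')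
    (hlt : g x < g x') : g y ≤ g y' := by
  by_contra! hgt
  have hy : y ∉ A := (hA _ _ hxy).1 hx
  have hy' : y' ∉ A := (hA _ _ hxy').1 hx'
  have hkx : key x ≤ key x' := not_lt.1 fun h => (hmono (iff_of_true hx' hx) h).not_gt hlt
  have hky : key y' ≤ key y := not_lt.1 fun h => (hmono (iff_of_false hy hy') h).not_gt hgt
  rcases hkx.eq_or_lt with hkx | hkx
  · obtain rfl := hL.eq_of_adj_of_key_eq hA (by rintro rfl; exact hlt.ne rfl) hkx
      (iff_of_true hx hx') hxy hxy'
    exact hgt.ne rfl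
  rcases hky.eq_or_lt with hky | hky
  · obtain rfl := hL.eq_of_adj_of_key_eq hA (by rintro rfl; exact hgt.ne rfl) hky
      (iff_of_false hy' hy) hxy'.symm hxy.symm
    exact hlt.ne rfl
  -- now `key x' = key y = key x + 1`, so `y` and `x'` are the same spine vertex
  have h1 := hL.le_succ_of_adj hxy'
  have h2 := hL.le_succ_of_adj hxy.symm
  have hyS := hL.mem_of_adj_of_key_ne hxy.symm (by omega)
  have hx'S := hL.mem_of_adj_of_key_ne hxy' (by omega)
  exact hy (hL.injOn hyS hx'S (by omega) ▸ hx')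

end IsSpineLayout

end SpineLayout

structure IsSplitSumLabeling {W : Type*} (H : SimpleGraph W) (r p : ℕ) (g : W → ℕ) : Prop where
  mem_Icc : ∀ v, g v ∈ Set.Icc 1 p
  injective : g.Injective
  le_iff_lt_of_adj : ∀ ⦃u v⦄, H.Adj u v → (g u ≤ r ↔ r < g v)
  sym2_eq_of_add_eq : ∀ ⦃u v u' v'⦄, H.Adj u v → H.Adj u' v' →
    g u + g v = g u' + g v' → s(u, v) = s(u', v')

theorem IsCaterpillar.exists_isSplitSumLabeling {W : Type*} [Fintype W] {H : SimpleGraph W}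
    (hH : IsCaterpillar H) {r s : ℕ} (hT : HasType H r s) :
    ∃ g, IsSplitSumLabeling H r (r + s) g := by
  obtain ⟨S, key, hL⟩ := hH.exists_isSpineLayout
  obtain ⟨-, A, rfl, rfl, hA⟩ := hT
  obtain ⟨g, hinj, hIcc, hside, hmono⟩ := exists_labeling_strictMono_on_parts A key
  refine ⟨g, ⟨?_, hinj, fun u v huv => ?_, ?_⟩⟩
  · rwa [Set.ncard_add_ncard_compl, Nat.card_eq_fintype_card]
  · rw [hside, ← not_le, hside]
    exact hA u v huv
  · refine sym2_eq_of_add_eq_of_oriented (P := (· ∈ A)) (fun u v huv => ?_) g ?_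
    · have := hA u v huv
      tauto
    intro x y x' y' hx hx' hxy hxy' hsum
    rcases lt_trichotomy (g x) (g x') with hlt | heq | hlt
    · have := hL.le_of_lt_of_adj hA hmono hx hx' hxy hxy' hlt
      omega
    · obtain rfl := hinj heq
      obtain rfl : y = y' := hinj (by omega)
      rfl
    · have := hL.le_of_lt_of_adj hA hmono hx' hx hxy' hxy hlt
      omega

lemma Nat.eq_and_eq_of_mul_add_eq_mul_add {t x y a b : ℕ} (ha : a < t) (hb : b < t)
    (h : t * x + a = t * y + b) : x = y ∧ a = b := by
  have ht : 0 < t := by omega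
  have hx : (t * x + a) / t = x := by rw [Nat.mul_add_div ht, Nat.div_eq_of_lt ha, add_zero]
  have hy : (t * y + b) / t = y := by rw [Nat.mul_add_div ht, Nat.div_eq_of_lt hb, add_zero]
  obtain rfl : x = y := by rw [← hx, ← hy, h]
  omega

/-- `k ↦ k + h + 1 (mod 2h + 1)` on `0, …, 2h`; then `k + shift h k` runs through `h, …, 3h`,
each value once. -/
def shift (h k : ℕ) : ℕ := if k < h then k + h + 1 else k - h

section Shift

variable {h k k' : ℕ}

lemma shift_lt (hk : k < 2 * h + 1) : shift h k < 2 * h + 1 := by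
  unfold shift; split <;> omega

lemma eq_of_shift_eq (hk : k < 2 * h + 1) (hk' : k' < 2 * h + 1) (he : shift h k = shift h k') :
    k = k' := by
  unfold shift at he; split at he <;> split at he <;> omega

lemma add_shift_mem_Icc (hk : k < 2 * h + 1) : k + shift h k ∈ Set.Icc h (3 * h) := by
  unfold shift; split <;> constructor <;> omega

lemma eq_of_add_shift_eq (he : k + shift h k = k' + shift h k') : k = k' := by
  unfold shift at he; split at he <;> split at he <;> omega

end Shift

section Blocks

variable {V : Type*} {G : SimpleGraph V} {h r p : ℕ} {idx g : V → ℕ}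

/-- `g` restricted to each fibre of `idx` is an `IsSplitSumLabeling`, and edges stay within
fibres. -/
structure IsBlockSplitSumLabeling (G : SimpleGraph V) (t r p : ℕ) (idx g : V → ℕ) : Prop where
  idx_lt : ∀ v, idx v < t
  idx_eq_of_adj : ∀ ⦃u v⦄, G.Adj u v → idx u = idx v
  mem_Icc : ∀ v, g v ∈ Set.Icc 1 p
  eq_of_idx_eq_of_eq : ∀ ⦃u v⦄, idx u = idx v → g u = g v → u = v
  le_iff_lt_of_adj : ∀ ⦃u v⦄, G.Adj u v → (g u ≤ r ↔ r < g v)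
  sym2_eq_of_add_eq : ∀ ⦃u v u' v'⦄, G.Adj u v → G.Adj u' v' → idx u = idx u' →
    g u + g v = g u' + g v' → s(u, v) = s(u', v')

def blockLabel (h r : ℕ) (idx g : V → ℕ) (v : V) : ℕ :=
  (2 * h + 1) * (g v - 1) + (if g v ≤ r then idx v else shift h (idx v)) + 1

namespace IsBlockSplitSumLabeling

variable (hB : IsBlockSplitSumLabeling G (2 * h + 1) r p idx g)
include hB

lemma offset_lt (v : V) : (if g v ≤ r then idx v else shift h (idx v)) < 2 * h + 1 := by
  split
  · exact hB.idx_lt v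
  · exact shift_lt (hB.idx_lt v)

lemma blockLabel_mem_Icc (v : V) : blockLabel h r idx g v ∈ Set.Icc 1 ((2 * h + 1) * p) := by
  have hoff := hB.offset_lt v
  obtain ⟨hg1, hgp⟩ := hB.mem_Icc v
  have : (2 * h + 1) * (g v - 1 + 1) ≤ (2 * h + 1) * p := Nat.mul_le_mul_left _ (by omega)
  rw [mul_add_one] at this
  unfold blockLabel
  constructor <;> omega

lemma blockLabel_injective : (blockLabel h r idx g).Injective := by
  intro u v huv
  obtain ⟨hg, hoff⟩ := Nat.eq_and_eq_of_mul_add_eq_mul_add (hB.offset_lt u) (hB.offset_lt v)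
    (Nat.add_right_cancel huv)
  have hg : g u = g v := by
    obtain ⟨hu, -⟩ := hB.mem_Icc u
    obtain ⟨hv, -⟩ := hB.mem_Icc v
    omega
  refine hB.eq_of_idx_eq_of_eq ?_ hg
  by_cases hu : g u ≤ r
  · simpa [hu, hg ▸ hu] using hoff
  · simp only [hu, hg ▸ hu, if_false] at hoff
    exact eq_of_shift_eq (hB.idx_lt u) (hB.idx_lt v) hoff

lemma blockLabel_add_blockLabel {x y : V} (hxy : G.Adj x y) (hx : g x ≤ r) :
    blockLabel h r idx g x + blockLabel h r idx g y =
      (2 * h + 1) * (g x + g y - 2) + (idx x + shift h (idx x)) + 2 := by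
  have hy : ¬ g y ≤ r := not_le.2 ((hB.le_iff_lt_of_adj hxy).1 hx)
  have hsub : g x + g y - 2 = (g x - 1) + (g y - 1) := by
    obtain ⟨hx1, -⟩ := hB.mem_Icc x
    obtain ⟨hy1, -⟩ := hB.mem_Icc y
    omega
  simp only [blockLabel, hx, hy, if_true, if_false, hsub, mul_add, hB.idx_eq_of_adj hxy]
  ring

lemma blockLabel_add_blockLabel_mem_Ico {u v : V} (huv : G.Adj u v) :
    blockLabel h r idx g u + blockLabel h r idx g v ∈
      Set.Ico ((2 * h + 1) * r + h + 2) ((2 * h + 1) * r + h + 2 + (2 * h + 1) * (p - 1)) := by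
  wlog hu : g u ≤ r generalizing u v
  · rw [add_comm (blockLabel h r idx g u)]
    exact this huv.symm ((hB.le_iff_lt_of_adj huv.symm).2 (not_le.1 hu))
  have hv := (hB.le_iff_lt_of_adj huv).1 hu
  obtain ⟨hu1, -⟩ := hB.mem_Icc u
  obtain ⟨-, hvp⟩ := hB.mem_Icc v
  obtain ⟨hk1, hk2⟩ := add_shift_mem_Icc (hB.idx_lt u)
  have hlow : (2 * h + 1) * r ≤ (2 * h + 1) * (g u + g v - 2) :=
    Nat.mul_le_mul_left _ (by omega)
  have hhigh : (2 * h + 1) * (g u + g v - 2 + 1) ≤ (2 * h + 1) * (r + (p - 1)) :=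
    Nat.mul_le_mul_left _ (by omega)
  rw [mul_add_one, mul_add] at hhigh
  rw [hB.blockLabel_add_blockLabel huv hu]
  constructor <;> omega

lemma sym2_eq_of_blockLabel_add_eq {u v u' v' : V} (huv : G.Adj u v) (hu'v' : G.Adj u' v')
    (hsum : blockLabel h r idx g u + blockLabel h r idx g v =
      blockLabel h r idx g u' + blockLabel h r idx g v') : s(u, v) = s(u', v') := by
  refine sym2_eq_of_add_eq_of_oriented (P := (g · ≤ r)) (fun u v huv => ?_) _ ?_ huv hu'v' hsum
  · by_contra! h
    exact (not_le.2 h.1) ((hB.le_iff_lt_of_adj huv).2 h.2)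
  intro x y x' y' hx hx' hxy hxy' hsum
  rw [hB.blockLabel_add_blockLabel hxy hx, hB.blockLabel_add_blockLabel hxy' hx'] at hsum
  obtain ⟨hk0, hk⟩ := add_shift_mem_Icc (h := h) (hB.idx_lt x)
  obtain ⟨hk0', hk'⟩ := add_shift_mem_Icc (h := h) (hB.idx_lt x')
  obtain ⟨hg, hw⟩ := Nat.eq_and_eq_of_mul_add_eq_mul_add (t := 2 * h + 1)
    (x := g x + g y - 2) (y := g x' + g y' - 2)
    (a := idx x + shift h (idx x) - h) (b := idx x' + shift h (idx x') - h) (by omega) (by omega)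
    (by omega)
  have hidx : idx x = idx x' := eq_of_add_shift_eq (h := h) (by omega)
  obtain ⟨hx1, -⟩ := hB.mem_Icc x
  obtain ⟨hy1, -⟩ := hB.mem_Icc y
  obtain ⟨hx1', -⟩ := hB.mem_Icc x'
  obtain ⟨hy1', -⟩ := hB.mem_Icc y'
  exact hB.sym2_eq_of_add_eq hxy hxy' hidx (by omega)

end IsBlockSplitSumLabeling

end Blocks

namespace SimpleGraph

variable {V : Type*} {G : SimpleGraph V}

theorem isBlockSplitSumLabeling_of_forall_supp {t r p : ℕ} (π : G.ConnectedComponent ≃ Fin t)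
    {g : ∀ c : G.ConnectedComponent, c.supp → ℕ}
    (hg : ∀ c, IsSplitSumLabeling (G.induce c.supp) r p (g c)) :
    IsBlockSplitSumLabeling G t r p (fun v => π (G.connectedComponentMk v))
      (fun v => g (G.connectedComponentMk v) ⟨v, rfl⟩) := by
  have hglue : ∀ c v (hv : v ∈ c.supp), g (G.connectedComponentMk v) ⟨v, rfl⟩ = g c ⟨v, hv⟩ := by
    rintro c v rfl
    rfl
  have hcomp : ∀ ⦃u v⦄, G.Adj u v → v ∈ (G.connectedComponentMk u).supp := fun u v huv =>
    ConnectedComponent.eq.2 huv.symm.reachable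
  refine ⟨fun v => (π _).isLt, fun u v huv => by rw [(hcomp huv : _ = _)],
    fun v => (hg _).mem_Icc _, fun u v hidx huv => ?_, fun u v huv => ?_,
    fun u v u' v' huv hu'v' hidx hsum => ?_⟩
  · have hv : v ∈ (G.connectedComponentMk u).supp := (π.injective (Fin.ext hidx)).symm
    rw [hglue _ v hv] at huv
    exact congrArg Subtype.val ((hg _).injective huv)
  · rw [hglue _ v (hcomp huv)]
    exact (hg _).le_iff_lt_of_adj huv
  · have hu' : u' ∈ (G.connectedComponentMk u).supp := (π.injective (Fin.ext hidx)).symm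
    have hv' : v' ∈ (G.connectedComponentMk u).supp := (hcomp hu'v').trans hu'
    rw [hglue _ v (hcomp huv), hglue _ u' hu', hglue _ v' hv'] at hsum
    have := (hg _).sym2_eq_of_add_eq (u := ⟨u, rfl⟩) (v := ⟨v, hcomp huv⟩) (u' := ⟨u', hu'⟩)
      (v' := ⟨v', hv'⟩) huv hu'v' hsum
    simpa using congrArg (Sym2.map Subtype.val) this

lemma nat_card_eq_mul_of_forall_card_supp [Finite V] {p : ℕ}
    (h : ∀ c : G.ConnectedComponent, Nat.card c.supp = p) :
    Nat.card V = Nat.card G.ConnectedComponent * p := by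
  have := Fintype.ofFinite G.ConnectedComponent
  rw [← Nat.card_congr (Equiv.sigmaFiberEquiv G.connectedComponentMk), Nat.card_sigma,
    Finset.sum_congr rfl fun c _ => show Nat.card {v // G.connectedComponentMk v = c} = p from h c,
    Finset.sum_const, Finset.card_univ, smul_eq_mul, Nat.card_eq_fintype_card]

lemma nat_card_mul_le_ncard_edgeSet [Finite V] {p : ℕ}
    (hcard : ∀ c : G.ConnectedComponent, Nat.card c.supp = p)
    (htree : ∀ c : G.ConnectedComponent, (G.induce c.supp).IsTree) :
    Nat.card G.ConnectedComponent * (p - 1) ≤ G.edgeSet.ncard := by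
  have := Fintype.ofFinite G.ConnectedComponent
  have hE : ∀ c : G.ConnectedComponent, Nat.card (G.induce c.supp).edgeSet = p - 1 := fun c => by
    have := (isTree_iff_connected_and_card.1 (htree c)).2
    rw [hcard c] at this
    omega
  let F : (Σ c : G.ConnectedComponent, (G.induce c.supp).edgeSet) → G.edgeSet :=
    fun e => (Embedding.induce e.1.supp).mapEdgeSet e.2
  have hF : F.Injective := by
    rintro ⟨c, ⟨e, he⟩⟩ ⟨c', ⟨e', he'⟩⟩ hee
    induction e using Sym2.ind with | _ x y => ?_
    induction e' using Sym2.ind with | _ x' y' => ?_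
    simp only [F, Embedding.mapEdgeSet, Function.Embedding.coeFn_mk, Hom.mapEdgeSet,
      Subtype.mk.injEq, Sym2.map_mk] at hee
    change s(x.1, y.1) = s(x'.1, y'.1) at hee
    obtain rfl : c = c' := by
      rw [← x.2]
      rcases Sym2.eq_iff.1 hee with ⟨h, -⟩ | ⟨h, -⟩
      · rw [h]; exact x'.2
      · rw [h]; exact y'.2
    simp only [Sigma.mk.injEq, heq_eq_eq, true_and, Subtype.mk.injEq]
    exact Sym2.map.injective Subtype.val_injective hee
  have := Nat.card_le_card_of_injective F hF
  rwa [Nat.card_sigma, Finset.sum_congr rfl fun c _ => hE c, Finset.sum_const, Finset.card_univ,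
    smul_eq_mul, ← Nat.card_eq_fintype_card, Nat.card_coe_set_eq] at this

end SimpleGraph

theorem exists_isEdgeMagicLabeling_of_vertex_labeling {V : Type*} [Fintype V]
    {G : SimpleGraph V} (L : V → ℕ) (c : ℕ) (hL : ∀ v, L v ∈ Set.Icc 1 (Fintype.card V))
    (hLinj : L.Injective)
    (hsum : ∀ ⦃u v⦄, G.Adj u v → L u + L v ∈ Set.Ico c (c + G.edgeSet.ncard))
    (hsum_inj : ∀ ⦃u v u' v'⦄, G.Adj u v → G.Adj u' v' → L u + L v = L u' + L v' →
      s(u, v) = s(u', v')) :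
    ∃ f k, IsEdgeMagicLabeling G f k := by
  classical
  set n := Fintype.card V
  set m := G.edgeSet.ncard
  let ES : Sym2 V → ℕ := Sym2.lift ⟨fun u v => L u + L v, fun _ _ => add_comm _ _⟩
  have hES : ∀ e : G.edgeSet, ES e ∈ Set.Ico c (c + m) := by
    rintro ⟨e, he⟩
    induction e using Sym2.ind with
    | _ u v => exact hsum he
  have hESinj : ∀ e e' : G.edgeSet, ES e = ES e' → e = e' := by
    rintro ⟨e, he⟩ ⟨e', he'⟩ hee
    induction e using Sym2.ind
    induction e' using Sym2.ind
    exact Subtype.ext (hsum_inj he he' hee)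
  -- the edge labels `n + m + c - ES e` fill `n + 1, …, n + m`
  let f : V ⊕ G.edgeSet → ℕ := Sum.elim L fun e => n + m + c - ES e
  have hfV : ∀ v, 1 ≤ f (.inl v) ∧ f (.inl v) ≤ n := hL
  have hfE : ∀ e, n < f (.inr e) ∧ f (.inr e) ≤ n + m := fun e => by
    obtain ⟨h1, h2⟩ := hES e
    show n < n + m + c - ES e ∧ n + m + c - ES e ≤ n + m
    omega
  have hinj : f.Injective := by
    rintro (v | e) (v' | e') h
    · rw [hLinj h]
    · have := hfV v; have := hfE e'; omega
    · have := hfE e; have := hfV v'; omega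
    · have := hES e; have := hES e'
      change n + m + c - ES e = n + m + c - ES e' at h
      rw [hESinj e e' (by simp only [Set.mem_Ico] at *; omega)]
  have hmaps : ∀ x, f x ∈ Set.Icc 1 (n + m) := by
    rintro (v | e)
    · have := hfV v; constructor <;> omega
    · have := hfE e; constructor <;> omega
  have hcard : Fintype.card (V ⊕ G.edgeSet) = n + m := by
    rw [Fintype.card_sum, ← Nat.card_eq_fintype_card (α := G.edgeSet), Nat.card_coe_set_eq]
  refine ⟨f, n + m + c, ⟨fun x _ => hmaps x, hinj.injOn, ?_⟩, fun u v huv => ?_⟩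
  · simpa using Finset.surjOn_of_injOn_of_card_le (s := Finset.univ) (t := Finset.Icc 1 (n + m))
      f (fun x _ => by simpa using hmaps x) hinj.injOn (by simp [hcard])
  · obtain ⟨-, h⟩ := hsum huv
    show L u + L v + (n + m + c - (L u + L v)) = n + m + c
    omega

/-- Every odd uniform army of caterpillars admits an edge-magic labeling:
if `G` is a graph with an odd number of connected components, each of which is a
caterpillar of the same type `(r, s)`, then `G` has an edge-magic labeling. -/
theorem edge_magic_of_odd_uniform_army_of_caterpillars
    {V : Type*} [Fintype V] (G : SimpleGraph V) (r s : ℕ)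
    (hodd : Odd (Nat.card G.ConnectedComponent))
    (hcat : ∀ c : G.ConnectedComponent, IsCaterpillar (G.induce c.supp) ∧
      HasType (G.induce c.supp) r s) :
    ∃ f k, IsEdgeMagicLabeling G f k := by
  classical
  obtain ⟨h, ht⟩ := hodd
  have hcard : ∀ c : G.ConnectedComponent, Nat.card c.supp = r + s := fun c => by
    obtain ⟨-, -, A, hA, hAc, -⟩ := hcat c
    rw [← hA, ← hAc, Set.ncard_add_ncard_compl]
  choose g hg using fun c => (hcat c).1.exists_isSplitSumLabeling (hcat c).2
  have hB := isBlockSplitSumLabeling_of_forall_supp (Finite.equivFinOfCardEq ht) hg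
  have hV : Fintype.card V = (2 * h + 1) * (r + s) := by
    rw [← Nat.card_eq_fintype_card, nat_card_eq_mul_of_forall_card_supp hcard, ht]
  have hE : (2 * h + 1) * (r + s - 1) ≤ G.edgeSet.ncard :=
    ht ▸ nat_card_mul_le_ncard_edgeSet hcard fun c => (hcat c).1.1
  exact exists_isEdgeMagicLabeling_of_vertex_labeling _ ((2 * h + 1) * r + h + 2)
    (fun v => hV ▸ hB.blockLabel_mem_Icc v) hB.blockLabel_injective
    (fun u v huv => Set.Ico_subset_Ico_right (by omega) (hB.blockLabel_add_blockLabel_mem_Ico huv))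
    fun u v u' v' huv hu'v' => hB.sym2_eq_of_blockLabel_add_eq huv hu'v'
end

section
/- An n-vertex graph G=(V,E) with m edges is super edge-magic if and only if there exists a bijective function f: V → {1,…,n} such that the set L = {f(u)+f(v) : uv ∈ E} consists of m consecutive integers; in such a case, f extends to a super edge-magic labeling of G. -/
/-- `f : V → {1,…,n}` is a bijection and `L = {f(u)+f(v) : uv ∈ E}` consists of `m`
consecutive integers, where `m` is the number of edges of `G`. -/
def GoodVertexLabeling {V : Type*} [Fintype V] (G : SimpleGraph V) (f : V → ℕ) : Prop :=
  Set.BijOn f Set.univ (Set.Icc 1 (Fintype.card V)) ∧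
  ∃ a : ℕ, {x : ℕ | ∃ u v : V, G.Adj u v ∧ f u + f v = x} = Set.Ico a (a + G.edgeSet.ncard)

/-! In a super edge-magic labeling the vertices carry the labels `1, …, n`, so the edges carry
`n + 1, …, n + m`, and the magic condition says that the weight `f u + f v` of an edge is `k`
minus its label: the weights form an interval of `m` integers. Conversely, if the weights of a
vertex bijection fill an interval `[a, a + m)` with `m = |E|`, they are pairwise distinct, and
labelling each edge by `n + m + a` minus its weight is super edge-magic with constant `n + m + a`. -/

open Set Function

theorem Set.bijOn_univ_iff {α β : Type*} {f : α → β} {t : Set β} :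
    BijOn f univ t ↔ Injective f ∧ range f = t := by
  refine ⟨fun h => ⟨injOn_univ.1 h.injOn, image_univ ▸ h.image_eq⟩, fun ⟨hinj, hrange⟩ => ?_⟩
  subst hrange
  exact ⟨fun x _ => mem_range_self x, hinj.injOn, fun y ⟨x, hx⟩ => ⟨x, mem_univ x, hx⟩⟩

theorem bijOn_sumElim_Icc_iff {α β : Type*} {f : α → ℕ} {g : β → ℕ} {a b : ℕ} :
    BijOn (Sum.elim f g) univ (Icc 1 (a + b)) ∧ range f = Icc 1 a ↔
      BijOn f univ (Icc 1 a) ∧ BijOn g univ (Icc (a + 1) (a + b)) := by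
  simp only [bijOn_univ_iff, Sum.elim_injective, Set.Sum.elim_range]
  constructor
  · rintro ⟨⟨⟨hf, hg, hfg⟩, hunion⟩, hrange⟩
    refine ⟨⟨hf, hrange⟩, hg, ?_⟩
    ext y
    constructor
    · rintro ⟨j, rfl⟩
      have hy : g j ∈ Icc 1 (a + b) := hunion ▸ Or.inr ⟨j, rfl⟩
      have hy' : g j ∉ Icc 1 a := hrange ▸ fun ⟨i, hi⟩ => hfg i j hi
      simp only [mem_Icc] at hy hy' ⊢
      omega
    · intro hy
      have hy' : y ∈ range f ∪ range g := hunion ▸ (Icc_subset_Icc_left (by omega) hy)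
      refine hy'.resolve_left ?_
      rw [hrange]
      simp only [mem_Icc] at hy ⊢
      omega
  · rintro ⟨⟨hf, hrange_f⟩, hg, hrange_g⟩
    refine ⟨⟨⟨hf, hg, fun i j hij => ?_⟩, ?_⟩, hrange_f⟩
    · have hi : f i ∈ Icc 1 a := hrange_f ▸ mem_range_self i
      have hj : g j ∈ Icc (a + 1) (a + b) := hrange_g ▸ mem_range_self j
      simp only [mem_Icc] at hi hj
      omega
    · ext y
      simp only [hrange_f, hrange_g, mem_union, mem_Icc]
      omega

theorem range_eq_Ico_of_range_eq_Icc_of_add_eq {ι : Type*} {g s : ι → ℕ} {c m k : ℕ}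
    (hg : range g = Icc (c + 1) (c + m)) (hgs : ∀ i, s i + g i = k) :
    range s = Ico (k - (c + m)) (k - (c + m) + m) := by
  have hg_mem (i : ι) : g i ∈ Icc (c + 1) (c + m) := hg ▸ mem_range_self i
  ext x
  simp only [mem_range, mem_Ico]
  constructor
  · rintro ⟨i, rfl⟩
    have := hgs i
    have := hg_mem i
    simp only [mem_Icc] at this
    omega
  · intro hx
    -- some `j` carries the top label `c + m`, so `k - (c + m)` is not truncated
    obtain ⟨j, hj⟩ : c + m ∈ range g := hg ▸ ⟨by omega, le_rfl⟩
    have := hgs j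
    obtain ⟨i, hi⟩ : k - x ∈ range g := by
      rw [hg, mem_Icc]
      omega
    have := hgs i
    exact ⟨i, by omega⟩

theorem range_const_sub_eq_Icc_of_range_eq_Ico {ι : Type*} {s : ι → ℕ} {a c m : ℕ}
    (hs : range s = Ico a (a + m)) :
    range (fun i => c + m + a - s i) = Icc (c + 1) (c + m) := by
  ext y
  simp only [mem_range, mem_Icc]
  constructor
  · rintro ⟨i, rfl⟩
    have : s i ∈ Ico a (a + m) := hs ▸ mem_range_self i
    simp only [mem_Ico] at this
    omega
  · intro hy
    obtain ⟨i, hi⟩ : c + m + a - y ∈ range s := by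
      rw [hs, mem_Ico]
      omega
    exact ⟨i, by omega⟩

theorem injective_of_ncard_range_eq {ι α : Type*} [Finite ι] {s : ι → α}
    (h : (range s).ncard = Nat.card ι) : Injective s := by
  rw [← image_univ, ← ncard_univ] at h
  exact injOn_univ.1 (injOn_of_ncard_image_eq h)

namespace SimpleGraph

variable {V : Type*} (G : SimpleGraph V)

def edgeWeight (f : V → ℕ) (e : G.edgeSet) : ℕ :=
  Sym2.lift ⟨fun u v => f u + f v, fun u v => add_comm (f u) (f v)⟩ e.val

variable {G}

theorem range_edgeWeight (f : V → ℕ) :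
    range (G.edgeWeight f) = {x | ∃ u v, G.Adj u v ∧ f u + f v = x} := by
  ext x
  constructor
  · rintro ⟨⟨e, he⟩, rfl⟩
    induction e using Sym2.ind with
    | _ u v => exact ⟨u, v, G.mem_edgeSet.1 he, rfl⟩
  · rintro ⟨u, v, huv, rfl⟩
    exact ⟨⟨s(u, v), G.mem_edgeSet.2 huv⟩, rfl⟩

theorem forall_adj_add_eq_iff (f : V → ℕ) (g : G.edgeSet → ℕ) (k : ℕ) :
    (∀ u v (h : G.Adj u v), f u + f v + g ⟨s(u, v), G.mem_edgeSet.2 h⟩ = k) ↔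
      ∀ e, G.edgeWeight f e + g e = k := by
  refine ⟨fun h => ?_, fun h u v huv => h ⟨s(u, v), G.mem_edgeSet.2 huv⟩⟩
  rintro ⟨e, he⟩
  induction e using Sym2.ind with
  | _ u v => exact h u v (G.mem_edgeSet.1 he)

end SimpleGraph

section

variable {V : Type*} {G : SimpleGraph V} [Fintype V]

theorem isSuperEdgeMagicLabeling_sumElim_iff (f : V → ℕ) (g : G.edgeSet → ℕ) :
    IsSuperEdgeMagicLabeling G (Sum.elim f g) ↔
      BijOn f univ (Icc 1 (Fintype.card V)) ∧
        BijOn g univ (Icc (Fintype.card V + 1) (Fintype.card V + G.edgeSet.ncard)) ∧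
          ∃ k, ∀ e, G.edgeWeight f e + g e = k := by
  simp only [IsSuperEdgeMagicLabeling, IsEdgeMagicLabeling, Sum.elim_inl, Sum.elim_inr,
    SimpleGraph.forall_adj_add_eq_iff, exists_and_left]
  rw [← and_assoc, ← bijOn_sumElim_Icc_iff]
  exact and_right_comm

theorem IsSuperEdgeMagicLabeling.goodVertexLabeling {F : V ⊕ G.edgeSet → ℕ}
    (hF : IsSuperEdgeMagicLabeling G F) : GoodVertexLabeling G (F ∘ Sum.inl) := by
  rw [← Sum.elim_comp_inl_inr F, isSuperEdgeMagicLabeling_sumElim_iff] at hF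
  obtain ⟨hf, hg, k, hk⟩ := hF
  rw [GoodVertexLabeling, ← SimpleGraph.range_edgeWeight]
  exact ⟨hf, _, range_eq_Ico_of_range_eq_Icc_of_add_eq (bijOn_univ_iff.1 hg).2 hk⟩

theorem GoodVertexLabeling.exists_extension {f : V → ℕ} (hf : GoodVertexLabeling G f) :
    ∃ F : V ⊕ G.edgeSet → ℕ, (∀ v, F (Sum.inl v) = f v) ∧ IsSuperEdgeMagicLabeling G F := by
  obtain ⟨hf, a, ha⟩ := hf
  rw [← SimpleGraph.range_edgeWeight] at ha
  set n := Fintype.card V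
  set m := G.edgeSet.ncard
  have hw_le (e : G.edgeSet) : G.edgeWeight f e ≤ n + m + a := by
    have : G.edgeWeight f e ∈ Ico a (a + m) := ha ▸ mem_range_self e
    rw [mem_Ico] at this
    omega
  have hw_inj : Injective (G.edgeWeight f) :=
    injective_of_ncard_range_eq (by rw [ha, ncard_Ico_nat, Nat.card_coe_set_eq]; omega)
  refine ⟨Sum.elim f (fun e => n + m + a - G.edgeWeight f e), fun _ => rfl, ?_⟩
  rw [isSuperEdgeMagicLabeling_sumElim_iff]
  refine ⟨hf, bijOn_univ_iff.2 ⟨fun e e' h => hw_inj ?_, range_const_sub_eq_Icc_of_range_eq_Ico ha⟩,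
    n + m + a, fun e => ?_⟩
  · beta_reduce at h
    have := hw_le e
    have := hw_le e'
    omega
  · have := hw_le e
    omega

end

/-- Figueroa-Centeno–Ichishima–Muntaner-Batle.  An `n`-vertex graph `G`
with `m` edges is super edge-magic if and only if there is a bijection `f : V → {1,…,n}`
such that `{f(u)+f(v) : uv ∈ E}` consists of `m` consecutive integers; in such a case,
`f` extends to a super edge-magic labeling of `G`. -/
theorem super_edge_magic_iff_good_vertex_labeling
    {V : Type*} [Fintype V] (G : SimpleGraph V) :
    (SuperEdgeMagic G ↔ ∃ f : V → ℕ, GoodVertexLabeling G f) ∧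
    ∀ f : V → ℕ, GoodVertexLabeling G f →
      ∃ F : V ⊕ ↥G.edgeSet → ℕ, (∀ v : V, F (Sum.inl v) = f v) ∧
        IsSuperEdgeMagicLabeling G F :=
  ⟨⟨fun ⟨_, hF⟩ => ⟨_, hF.goodVertexLabeling⟩,
      fun ⟨_, hf⟩ => let ⟨F, _, hF⟩ := hf.exists_extension; ⟨F, hF⟩⟩,
    fun _ hf => hf.exists_extension⟩
end

section
/- Let p be an odd positive integer. Then for every integer i with 1 ≤ i ≤ p, (i−1) + (((p−1)/2 + i − 1) mod p) + ((2p − 2i + 1) mod p) = (3p−3)/2. -/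
/-- Let `p` be an odd positive integer.  Then for every integer `i` with
`1 ≤ i ≤ p`, `(i−1) + (((p−1)/2 + i − 1) mod p) + ((2p − 2i + 1) mod p) = (3p−3)/2`. -/
theorem caterpillar_magic_constant_identity (p : ℕ) (hp : Odd p) (hp1 : 1 ≤ p) :
    ∀ i : ℕ, 1 ≤ i → i ≤ p →
      (i - 1) + (((p - 1) / 2 + i - 1) % p) + ((2 * p - 2 * i + 1) % p) = (3 * p - 3) / 2 := by
  obtain ⟨k, hk⟩ := hp
  subst hk
  intro i h1 h2
  have hd : (2 * k + 1 - 1) / 2 = k := by omega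
  rw [hd]
  rcases le_or_gt i (k + 1) with h | h
  · have ha : (k + i - 1) % (2 * k + 1) = k + i - 1 := Nat.mod_eq_of_lt (by omega)
    rcases eq_or_lt_of_le h with h' | h'
    · have hb : (2 * (2 * k + 1) - 2 * i + 1) % (2 * k + 1) = 0 := by
        have : 2 * (2 * k + 1) - 2 * i + 1 = 2 * k + 1 := by omega
        rw [this, Nat.mod_self]
      omega
    · have hb : (2 * (2 * k + 1) - 2 * i + 1) % (2 * k + 1) = 2 * k + 2 - 2 * i := by
        rw [Nat.mod_eq_sub_mod (by omega)]
        have : 2 * (2 * k + 1) - 2 * i + 1 - (2 * k + 1) = 2 * k + 2 - 2 * i := by omega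
        rw [this, Nat.mod_eq_of_lt (by omega)]
      omega
  · have ha : (k + i - 1) % (2 * k + 1) = i - k - 2 := by
      rw [Nat.mod_eq_sub_mod (by omega)]
      have : k + i - 1 - (2 * k + 1) = i - k - 2 := by omega
      rw [this, Nat.mod_eq_of_lt (by omega)]
    have hb : (2 * (2 * k + 1) - 2 * i + 1) % (2 * k + 1) =
        2 * (2 * k + 1) - 2 * i + 1 := Nat.mod_eq_of_lt (by omega)
    omega
end

section
/- Let r,s ≥ 1 and let T be a tree whose vertex set is partitioned into {u_1,…,u_r} and {v_1,…,v_s}, with every edge joining some u_j to some v_k, such that there do not exist edges u_j v_k and u_{j'} v_{k'} with j < j' and k > k'. Then for every integer m with 2 ≤ m ≤ r+s there is exactly one edge u_j v_k of T with j + k = m. -/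
/-- Let `r, s ≥ 1` and let `T` be a tree on the vertex set
`{u_1,…,u_r} ⊔ {v_1,…,v_s}` (modeled as `Fin r ⊕ Fin s`, 0-based), with every edge joining
some `u_j` to some `v_k`, such that there are no edges `u_j v_k` and `u_{j'} v_{k'}` with
`j < j'` and `k > k'`.  Then for every integer `m` with `2 ≤ m ≤ r + s` there is exactly
one edge `u_j v_k` of `T` with `j + k = m` (1-based indices). -/
theorem caterpillar_unique_edge_per_diagonal (r s : ℕ) (hr : 1 ≤ r) (hs : 1 ≤ s)
    (T : SimpleGraph (Fin r ⊕ Fin s)) (hT : T.IsTree)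
    (hbipL : ∀ j j' : Fin r, ¬ T.Adj (Sum.inl j) (Sum.inl j'))
    (hbipR : ∀ k k' : Fin s, ¬ T.Adj (Sum.inr k) (Sum.inr k'))
    (hcross : ∀ (j j' : Fin r) (k k' : Fin s),
      T.Adj (Sum.inl j) (Sum.inr k) → T.Adj (Sum.inl j') (Sum.inr k') →
      j < j' → ¬ k' < k) :
    ∀ m : ℕ, 2 ≤ m → m ≤ r + s →
      ∃! e : Fin r × Fin s,
        T.Adj (Sum.inl e.1) (Sum.inr e.2) ∧ (e.1.val + 1) + (e.2.val + 1) = m := by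
  classical
  -- key injectivity: the diagonal sum determines the edge
  have key : ∀ e e' : Fin r × Fin s, T.Adj (Sum.inl e.1) (Sum.inr e.2) →
      T.Adj (Sum.inl e'.1) (Sum.inr e'.2) →
      e.1.val + e.2.val = e'.1.val + e'.2.val → e = e' := by
    intro e e' he he' hsum
    rcases lt_trichotomy e.1.val e'.1.val with h | h | h
    · have := hcross e.1 e'.1 e.2 e'.2 he he' (Fin.lt_def.mpr h)
      rw [Fin.lt_def] at this; omega
    · have h2 : e.2.val = e'.2.val := by omega
      exact Prod.ext (Fin.ext h) (Fin.ext h2)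
    · have := hcross e'.1 e.1 e'.2 e.2 he' he (Fin.lt_def.mpr h)
      rw [Fin.lt_def] at this; omega
  set A : Finset (Fin r × Fin s) :=
    Finset.univ.filter (fun e => T.Adj (Sum.inl e.1) (Sum.inr e.2)) with hA
  have hAcard : A.card = r + s - 1 := by
    have h1 : A.card = T.edgeFinset.card := by
      apply Finset.card_bij (fun e _ => s(Sum.inl e.1, Sum.inr e.2))
      · intro e he
        rw [SimpleGraph.mem_edgeFinset, SimpleGraph.mem_edgeSet]
        simpa [hA] using he
      · intro e he e' he' h
        rw [Sym2.eq_iff] at h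
        rcases h with ⟨h1, h2⟩ | ⟨h1, h2⟩
        · exact Prod.ext (Sum.inl.inj h1) (Sum.inr.inj h2)
        · exact absurd h1 (by simp)
      · intro x hx
        induction x using Sym2.ind with
        | _ a b =>
          rw [SimpleGraph.mem_edgeFinset, SimpleGraph.mem_edgeSet] at hx
          match a, b with
          | Sum.inl j, Sum.inl j' => exact absurd hx (hbipL j j')
          | Sum.inr k, Sum.inr k' => exact absurd hx (hbipR k k')
          | Sum.inl j, Sum.inr k =>
            exact ⟨(j, k), by simp [hA, hx], rfl⟩
          | Sum.inr k, Sum.inl j =>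
            exact ⟨(j, k), by simp [hA, hx.symm], Sym2.eq_swap⟩
    have h2 := hT.card_edgeFinset
    have h3 : Fintype.card (Fin r ⊕ Fin s) = r + s := by simp
    omega
  have hinj : Set.InjOn (fun e : Fin r × Fin s => e.1.val + e.2.val) A := by
    intro e he e' he' h
    simp only [hA, Finset.coe_filter, Set.mem_setOf_eq] at he he'
    exact key e e' he.2 he'.2 h
  have hBcard : (A.image fun e => e.1.val + e.2.val).card = r + s - 1 := by
    rw [Finset.card_image_of_injOn hinj, hAcard]
  have hsub : (A.image fun e => e.1.val + e.2.val) ⊆ Finset.range (r + s - 1) := by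
    intro n hn
    simp only [Finset.mem_image] at hn
    obtain ⟨e, he, rfl⟩ := hn
    rw [Finset.mem_range]
    have := e.1.isLt; have := e.2.isLt; omega
  have hEq : (A.image fun e => e.1.val + e.2.val) = Finset.range (r + s - 1) :=
    Finset.eq_of_subset_of_card_le hsub (by rw [hBcard, Finset.card_range])
  intro m hm2 hmrs
  have hmem : m - 2 ∈ Finset.range (r + s - 1) := by rw [Finset.mem_range]; omega
  rw [← hEq, Finset.mem_image] at hmem
  obtain ⟨e, he, hesum⟩ := hmem
  rw [hA, Finset.mem_filter] at he
  refine ⟨e, ⟨he.2, by omega⟩, ?_⟩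
  rintro e' ⟨he', hsum'⟩
  exact key e' e he' he.2 (by omega)
end

section
/- Let r,s ≥ 1 and let T be a tree whose vertex set is partitioned into {u_1,…,u_r} and {v_1,…,v_s}, with every edge joining some u_j to some v_k, such that there do not exist edges u_j v_k and u_{j'} v_{k'} with j < j' and k > k'. Let a, b, c be integers and define a labeling f by f(u_j) = a + j − 1 for 1 ≤ j ≤ r, f(v_k) = b + k − 1 for 1 ≤ k ≤ s, and f(u_j v_k) = c + (r+s) − (j+k) for every edge u_j v_k of T. Then f(u) + f(v) + f(uv) = a + b + c + r + s − 2 for every edge uv of T; moreover the edge labels used are exactly the consecutive integers c, c+1, …, c+(r+s−2). -/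
/-!
The edges of `T` are pairs `(j, k)`, and a tree on `r + s` vertices has `r + s - 1` of them.
The non-crossing condition makes `j + k` injective on edges: two edges with the same sum and
`j < j'` would have `k > k'`. Since `j + k` only takes the `r + s - 1` values `0, …, r + s - 2`,
every value is attained exactly once, so the edge labels `c + (r + s - 2) - (j + k)` fill the
interval `[c, c + r + s - 2]`; the constant edge sum is plain arithmetic.
-/

open Finset

namespace SimpleGraph

variable {α β : Type*} [Fintype α] [Fintype β]

def crossEdgeFinset (G : SimpleGraph (α ⊕ β)) [DecidableRel G.Adj] : Finset (α × β) :=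
  univ.filter fun p => G.Adj (.inl p.1) (.inr p.2)

theorem mem_crossEdgeFinset {G : SimpleGraph (α ⊕ β)} [DecidableRel G.Adj] {p : α × β} :
    p ∈ G.crossEdgeFinset ↔ G.Adj (.inl p.1) (.inr p.2) := by
  simp [crossEdgeFinset]

theorem card_crossEdgeFinset (G : SimpleGraph (α ⊕ β)) [DecidableRel G.Adj]
    (hl : ∀ a a' : α, ¬ G.Adj (.inl a) (.inl a')) (hr : ∀ b b' : β, ¬ G.Adj (.inr b) (.inr b')) :
    #G.crossEdgeFinset = #G.edgeFinset := by
  classical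
  have hinj : Function.Injective fun p : α × β => s(Sum.inl p.1, Sum.inr p.2) := by
    rintro ⟨a, b⟩ ⟨a', b'⟩ h
    simpa [Sym2.eq_iff] using h
  rw [← card_image_of_injective _ hinj]
  congr 1
  ext e
  induction e using Sym2.ind with
  | _ x y =>
    rcases x with a | b <;> rcases y with a' | b' <;>
      simp [crossEdgeFinset, Sym2.eq_swap, hl, hr]

end SimpleGraph

theorem Finset.image_eq_range_of_injOn {ι : Type*} {s : Finset ι} {f : ι → ℕ} {n : ℕ}
    (hf : ∀ i ∈ s, f i < n) (hinj : Set.InjOn f s) (hcard : #s = n) :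
    s.image f = range n := by
  refine eq_of_subset_of_card_le ?_ ?_
  · simpa [subset_iff] using hf
  · rw [card_image_of_injOn hinj, card_range, hcard]

theorem Fin.injOn_val_add_val_of_noncrossing {r s : ℕ} {S : Set (Fin r × Fin s)}
    (hS : ∀ p ∈ S, ∀ q ∈ S, p.1 < q.1 → ¬ q.2 < p.2) :
    Set.InjOn (fun p => (p.1 : ℕ) + p.2) S := by
  rintro ⟨j, k⟩ hp ⟨j', k'⟩ hq (hsum : (j : ℕ) + k = j' + k')
  have hj : j = j' := by
    rcases lt_trichotomy j j' with h | h | h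
    · exact absurd (show k' < k from Fin.lt_def.2 (by omega)) (hS _ hp _ hq h)
    · exact h
    · exact absurd (show k < k' from Fin.lt_def.2 (by omega)) (hS _ hq _ hp h)
  subst hj
  simp only [Prod.mk.injEq, true_and]
  omega

theorem SimpleGraph.IsTree.image_crossEdgeFinset_val_add_val {r s : ℕ}
    {T : SimpleGraph (Fin r ⊕ Fin s)} [DecidableRel T.Adj] (hT : T.IsTree)
    (hbipL : ∀ j j' : Fin r, ¬ T.Adj (.inl j) (.inl j'))
    (hbipR : ∀ k k' : Fin s, ¬ T.Adj (.inr k) (.inr k'))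
    (hcross : ∀ (j j' : Fin r) (k k' : Fin s),
      T.Adj (.inl j) (.inr k) → T.Adj (.inl j') (.inr k') → j < j' → ¬ k' < k) :
    T.crossEdgeFinset.image (fun p => (p.1 : ℕ) + p.2) = range (r + s - 1) := by
  refine image_eq_range_of_injOn (fun p _ => by omega) ?_ ?_
  · refine Fin.injOn_val_add_val_of_noncrossing fun p hp q hq => ?_
    exact hcross _ _ _ _ (mem_crossEdgeFinset.1 hp) (mem_crossEdgeFinset.1 hq)
  · have := hT.card_edgeFinset
    simp only [Fintype.card_sum, Fintype.card_fin] at this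
    rw [T.card_crossEdgeFinset hbipL hbipR]
    omega

theorem well_behaved_labeling_of_caterpillar_general (r s : ℕ)
    (T : SimpleGraph (Fin r ⊕ Fin s)) (hT : T.IsTree)
    (hbipL : ∀ j j' : Fin r, ¬ T.Adj (Sum.inl j) (Sum.inl j'))
    (hbipR : ∀ k k' : Fin s, ¬ T.Adj (Sum.inr k) (Sum.inr k'))
    (hcross : ∀ (j j' : Fin r) (k k' : Fin s),
      T.Adj (Sum.inl j) (Sum.inr k) → T.Adj (Sum.inl j') (Sum.inr k') →
      j < j' → ¬ k' < k)
    (a b c : ℤ) :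
    (∀ (j : Fin r) (k : Fin s), T.Adj (Sum.inl j) (Sum.inr k) →
      (a + (j.val + 1) - 1) + (b + (k.val + 1) - 1) +
        (c + (r + s : ℕ) - ((j.val + 1) + (k.val + 1))) =
      a + b + c + r + s - 2) ∧
    {x : ℤ | ∃ (j : Fin r) (k : Fin s), T.Adj (Sum.inl j) (Sum.inr k) ∧
        x = c + (r + s : ℕ) - ((j.val + 1) + (k.val + 1))} =
      Set.Icc c (c + (r + s : ℕ) - 2) := by
  classical
  refine ⟨fun j k _ => by push_cast; ring, ?_⟩
  have hsums := hT.image_crossEdgeFinset_val_add_val hbipL hbipR hcross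
  ext x
  simp only [Set.mem_ofPred_eq, Set.mem_Icc]
  constructor
  · rintro ⟨j, k, -, rfl⟩
    have := j.isLt
    have := k.isLt
    push_cast
    omega
  · rintro ⟨hcx, hxc⟩
    push_cast at hxc
    have ht : (c + r + s - 2 - x).toNat ∈ range (r + s - 1) := mem_range.2 (by omega)
    rw [← hsums, mem_image] at ht
    obtain ⟨⟨j, k⟩, hjk, hsum : (j : ℕ) + k = _⟩ := ht
    refine ⟨j, k, SimpleGraph.mem_crossEdgeFinset.1 hjk, ?_⟩
    push_cast
    omega

/-- Let `r, s ≥ 1` and let `T` be a tree on the vertex set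
`{u_1,…,u_r} ⊔ {v_1,…,v_s}` (modeled as `Fin r ⊕ Fin s`, 0-based), with every edge joining
some `u_j` to some `v_k` and no edges `u_j v_k`, `u_{j'} v_{k'}` with `j < j'` and `k > k'`.
Let `a, b, c` be integers and define `f(u_j) = a + j − 1`, `f(v_k) = b + k − 1` and
`f(u_j v_k) = c + (r+s) − (j+k)` (1-based indices).  Then `f(u)+f(v)+f(uv) = a+b+c+r+s−2`
for every edge `uv` of `T`, and the edge labels used are exactly the consecutive integers
`c, c+1, …, c+(r+s−2)`. -/
theorem well_behaved_labeling_of_caterpillar (r s : ℕ) (hr : 1 ≤ r) (hs : 1 ≤ s)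
    (T : SimpleGraph (Fin r ⊕ Fin s)) (hT : T.IsTree)
    (hbipL : ∀ j j' : Fin r, ¬ T.Adj (Sum.inl j) (Sum.inl j'))
    (hbipR : ∀ k k' : Fin s, ¬ T.Adj (Sum.inr k) (Sum.inr k'))
    (hcross : ∀ (j j' : Fin r) (k k' : Fin s),
      T.Adj (Sum.inl j) (Sum.inr k) → T.Adj (Sum.inl j') (Sum.inr k') →
      j < j' → ¬ k' < k)
    (a b c : ℤ) :
    (∀ (j : Fin r) (k : Fin s), T.Adj (Sum.inl j) (Sum.inr k) →
      (a + (j.val + 1) - 1) + (b + (k.val + 1) - 1) +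
        (c + (r + s : ℕ) - ((j.val + 1) + (k.val + 1))) =
      a + b + c + r + s - 2) ∧
    {x : ℤ | ∃ (j : Fin r) (k : Fin s), T.Adj (Sum.inl j) (Sum.inr k) ∧
        x = c + (r + s : ℕ) - ((j.val + 1) + (k.val + 1))} =
      Set.Icc c (c + (r + s : ℕ) - 2) :=
  well_behaved_labeling_of_caterpillar_general r s T hT hbipL hbipR hcross a b c
end
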